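/- arXiv:1806.07435 — 13 statements merged into one kernel-verified Lean document; each statement's English description precedes it below -/
import Mathlib

section
/- The minimum-knapsack set Π equals the set-covering set defined by its cover inequalities; that is, Π = {x ∈ {0,1}^n : x(S) ≥ 1 for every S ⊆ suppt(w) with w(S) ≥ Σ_{j=1}^n w_j − w_0 + 1}. -/
open Finset

/-- The minimum-knapsack set Π equals the set-covering set defined by its
cover inequalities. -/
theorem stmt_0 (n : ℕ) (hn : 0 < n) (w : Fin n → ℕ) (w0 : ℕ)
    (hw : ∀ j, w j ≤ w0) :
    {x : Fin n → ℝ | (∀ j, x j = 0 ∨ x j = 1) ∧ (w0 : ℝ) ≤ ∑ j, (w j : ℝ) * x j}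
      =
    {x : Fin n → ℝ | (∀ j, x j = 0 ∨ x j = 1) ∧
      ∀ S : Finset (Fin n), (∀ j ∈ S, w j ≠ 0) →
        ((∑ j, (w j : ℤ)) - (w0 : ℤ) + 1 ≤ ∑ j ∈ S, (w j : ℤ)) →
        (1 : ℝ) ≤ ∑ j ∈ S, x j} := by
  classical
  ext x
  simp only [Set.mem_setOf_eq]
  constructor
  · rintro ⟨hx, hk⟩
    refine ⟨hx, fun S hS hwS => ?_⟩
    by_contra hlt
    push_neg at hlt
    have hx0 : ∀ j ∈ S, x j = 0 := by
      intro j hj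
      rcases hx j with h0 | h1
      · exact h0
      · exfalso
        have h1le : (1 : ℝ) ≤ ∑ j ∈ S, x j := by
          calc (1 : ℝ) = x j := h1.symm
            _ ≤ ∑ j ∈ S, x j :=
              Finset.single_le_sum (fun i _ => by rcases hx i with h | h <;> simp [h]) hj
        linarith
    -- knapsack sum is supported on Sᶜ
    have hsplit : (∑ j ∈ S, (w j : ℝ) * x j) + ∑ j ∈ Sᶜ, (w j : ℝ) * x j
        = ∑ j, (w j : ℝ) * x j := Finset.sum_add_sum_compl S _
    have hS0 : ∑ j ∈ S, (w j : ℝ) * x j = 0 := by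
      apply Finset.sum_eq_zero
      intro j hj
      rw [hx0 j hj, mul_zero]
    have hle : ∑ j ∈ Sᶜ, (w j : ℝ) * x j ≤ ∑ j ∈ Sᶜ, (w j : ℝ) := by
      apply Finset.sum_le_sum
      intro j _
      rcases hx j with h | h <;> simp [h]
    have hsplit2 : (∑ j ∈ S, (w j : ℝ)) + ∑ j ∈ Sᶜ, (w j : ℝ)
        = ∑ j, (w j : ℝ) := Finset.sum_add_sum_compl S _
    have hwS' : (∑ j, (w j : ℝ)) - (w0 : ℝ) + 1 ≤ ∑ j ∈ S, (w j : ℝ) := by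
      exact_mod_cast hwS
    linarith
  · rintro ⟨hx, hc⟩
    refine ⟨hx, ?_⟩
    set S : Finset (Fin n) := univ.filter (fun j => x j = 0 ∧ w j ≠ 0) with hSdef
    have hS : ∀ j ∈ S, w j ≠ 0 := by
      intro j hj
      exact (Finset.mem_filter.mp hj).2.2
    -- x vanishes on S, so the cover inequality for S cannot have its hypothesis hold
    have hxS : ∑ j ∈ S, x j = 0 := by
      apply Finset.sum_eq_zero
      intro j hj
      exact (Finset.mem_filter.mp hj).2.1
    have hnot : ¬ ((∑ j, (w j : ℤ)) - (w0 : ℤ) + 1 ≤ ∑ j ∈ S, (w j : ℤ)) := by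
      intro h
      have := hc S hS h
      rw [hxS] at this
      linarith
    push_neg at hnot
    have hSle : ∑ j ∈ S, (w j : ℤ) ≤ (∑ j, (w j : ℤ)) - (w0 : ℤ) := by linarith
    -- Σ w·x = Σ w − Σ_{x=0} w  and  Σ_S w = Σ_{x=0} w
    have hkey : ∑ j, (w j : ℝ) * x j = (∑ j, (w j : ℝ)) - ∑ j ∈ S, (w j : ℝ) := by
      have : ∑ j ∈ S, (w j : ℝ) = ∑ j, if x j = 0 ∧ w j ≠ 0 then (w j : ℝ) else 0 := by
        rw [hSdef, Finset.sum_filter]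
      rw [this, ← Finset.sum_sub_distrib]
      apply Finset.sum_congr rfl
      intro j _
      rcases hx j with h | h
      · by_cases hw0 : w j = 0 <;> simp [h, hw0]
      · have : x j ≠ 0 := by rw [h]; norm_num
        simp [h, this]
    have hSle' : ∑ j ∈ S, (w j : ℝ) ≤ (∑ j, (w j : ℝ)) - (w0 : ℝ) := by
      exact_mod_cast hSle
    linarith
end

section
/- Let α_1,…,α_n, α₀ be nonnegative integers with suppt(α) ⊆ suppt(w). Then the inequality Σ_{j=1}^n α_j x_j ≥ α₀ is valid for Π if and only if for every S ⊆ suppt(α), α(S) ≥ Σ_{j=1}^n α_j − α₀ + 1 implies w(S) ≥ Σ_{j=1}^n w_j − w_0 + 1. -/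
open Finset

/-- An inequality with nonnegative integer coefficients supported in
suppt(w) is valid for the minimum-knapsack set Π iff every subset S of suppt(α) with
α(S) ≥ Σα − α₀ + 1 satisfies w(S) ≥ Σw − w₀ + 1. -/
theorem stmt_1 (n : ℕ) (hn : 0 < n) (w : Fin n → ℕ) (w0 : ℕ)
    (hw : ∀ j, w j ≤ w0) (α : Fin n → ℕ) (α0 : ℕ)
    (hsupp : ∀ j, α j ≠ 0 → w j ≠ 0) :
    (∀ x : Fin n → ℝ, (∀ j, x j = 0 ∨ x j = 1) →
        (w0 : ℝ) ≤ ∑ j, (w j : ℝ) * x j → (α0 : ℝ) ≤ ∑ j, (α j : ℝ) * x j)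
      ↔
    (∀ S : Finset (Fin n), (∀ j ∈ S, α j ≠ 0) →
        ((∑ j, (α j : ℤ)) - (α0 : ℤ) + 1 ≤ ∑ j ∈ S, (α j : ℤ)) →
        ((∑ j, (w j : ℤ)) - (w0 : ℤ) + 1 ≤ ∑ j ∈ S, (w j : ℤ))) := by
  constructor
  · intro h S hS hαS
    by_contra hw'
    push_neg at hw'
    set x : Fin n → ℝ := fun j => if j ∈ S then 0 else 1 with hxdef
    have hx : ∀ j, x j = 0 ∨ x j = 1 := by
      intro j; by_cases hj : j ∈ S <;> simp [hxdef, hj]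
    have key : ∀ f : Fin n → ℕ, ∑ j, (f j : ℝ) * x j
        = (∑ j, (f j : ℝ)) - ∑ j ∈ S, (f j : ℝ) := by
      intro f
      have : ∀ j ∈ (univ : Finset (Fin n)),
          (f j : ℝ) * x j = (f j : ℝ) - (if j ∈ S then (f j : ℝ) else 0) := by
        intro j _; by_cases hj : j ∈ S <;> simp [hxdef, hj]
      rw [Finset.sum_congr rfl this, Finset.sum_sub_distrib]
      congr 1
      rw [Finset.sum_ite_mem, Finset.univ_inter]
    -- w·x ≥ w0
    have hw'' : (w0 : ℝ) ≤ ∑ j, (w j : ℝ) * x j := by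
      rw [key]
      have : (∑ j ∈ S, (w j : ℤ)) ≤ (∑ j, (w j : ℤ)) - w0 := by linarith
      have : ((∑ j ∈ S, (w j : ℤ) : ℤ) : ℝ) ≤ (((∑ j, (w j : ℤ)) - w0 : ℤ) : ℝ) := by
        exact_mod_cast this
      push_cast at this ⊢
      linarith
    have hα := h x hx hw''
    rw [key] at hα
    have hαS' : (((∑ j, (α j : ℤ)) - α0 + 1 : ℤ) : ℝ) ≤ ((∑ j ∈ S, (α j : ℤ) : ℤ) : ℝ) := by
      exact_mod_cast hαS
    push_cast at hα hαS'
    linarith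
  · intro h x hx hwx
    by_contra hαx
    push_neg at hαx
    set T := univ.filter (fun j => x j = 1) with hTdef
    have key : ∀ f : Fin n → ℕ, ∑ j, (f j : ℝ) * x j = ∑ j ∈ T, (f j : ℝ) := by
      intro f
      rw [hTdef, Finset.sum_filter]
      apply Finset.sum_congr rfl
      intro j _
      rcases hx j with h0 | h1
      · simp [h0]
      · simp [h1]
    set S := (univ \ T).filter (fun j => α j ≠ 0) with hSdef
    have hS : ∀ j ∈ S, α j ≠ 0 := by
      intro j hj; exact (Finset.mem_filter.1 hj).2
    have hSsum : ∑ j ∈ S, (α j : ℤ) = ∑ j ∈ univ \ T, (α j : ℤ) := by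
      rw [hSdef]
      apply Finset.sum_filter_of_ne
      intro j _ hne
      exact fun h0 => hne (by simp [h0])
    have hsub : ∑ j ∈ univ \ T, (α j : ℤ) = (∑ j, (α j : ℤ)) - ∑ j ∈ T, (α j : ℤ) :=
      Finset.sum_sdiff_eq_sub (Finset.subset_univ T)
    -- α(T) < α0 as integers
    have hαT : (∑ j ∈ T, (α j : ℤ)) + 1 ≤ α0 := by
      have := key α
      rw [this] at hαx
      have : (∑ j ∈ T, (α j : ℤ) : ℤ) < α0 := by
        have : ((∑ j ∈ T, (α j : ℤ) : ℤ) : ℝ) < (α0 : ℝ) := by push_cast; push_cast at hαx; linarith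
        exact_mod_cast this
      omega
    have hαS : (∑ j, (α j : ℤ)) - α0 + 1 ≤ ∑ j ∈ S, (α j : ℤ) := by
      rw [hSsum, hsub]; linarith
    have hwS := h S hS hαS
    have hwsub : ∑ j ∈ S, (w j : ℤ) ≤ (∑ j, (w j : ℤ)) - ∑ j ∈ T, (w j : ℤ) := by
      rw [← Finset.sum_sdiff_eq_sub (Finset.subset_univ T)]
      apply Finset.sum_le_sum_of_subset_of_nonneg
      · rw [hSdef]; exact Finset.filter_subset _ _
      · intro j _ _; positivity
    have hwT : (w0 : ℤ) ≤ ∑ j ∈ T, (w j : ℤ) := by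
      have := key w
      rw [this] at hwx
      have : (w0 : ℝ) ≤ ((∑ j ∈ T, (w j : ℤ) : ℤ) : ℝ) := by push_cast; push_cast at hwx; linarith
      exact_mod_cast this
    linarith
end

section
/- Suppose Σ_{j∈T} α_j x_j ≥ α₀ (with T ⊆ {1,…,n}) is a valid inequality for Σ(A) with α_j ≥ 0 for all j ∈ T and α₀ > 0. Then there is a row i of A whose support S_i satisfies S_i ⊆ T. -/
open Finset

/-- If Σ_{j∈T} α_j x_j ≥ α₀ is valid for the set covering set Σ(A),
with α_j ≥ 0 on T and α₀ > 0, then some row of A has its support contained in T. -/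
theorem stmt_2 (m n : ℕ) (hm : 0 < m) (hn : 0 < n)
    (A : Fin m → Fin n → ℝ) (hA : ∀ i j, A i j = 0 ∨ A i j = 1)
    (T : Finset (Fin n)) (α : Fin n → ℝ) (α0 : ℝ)
    (hα : ∀ j ∈ T, 0 ≤ α j) (hα0 : 0 < α0)
    (hvalid : ∀ x : Fin n → ℝ, (∀ j, x j = 0 ∨ x j = 1) →
        (∀ i, (1 : ℝ) ≤ ∑ j, A i j * x j) → α0 ≤ ∑ j ∈ T, α j * x j) :
    ∃ i : Fin m, ∀ j : Fin n, A i j = 1 → j ∈ T := by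
  by_contra h
  push_neg at h
  set x : Fin n → ℝ := fun j => if j ∈ T then 0 else 1 with hx
  have hx01 : ∀ j, x j = 0 ∨ x j = 1 := by
    intro j; by_cases hj : j ∈ T <;> simp [hx, hj]
  have hfeas : ∀ i, (1 : ℝ) ≤ ∑ j, A i j * x j := by
    intro i
    obtain ⟨j, hj1, hjT⟩ := h i
    calc (1 : ℝ) = A i j * x j := by simp [hj1, hx, hjT]
      _ ≤ ∑ j, A i j * x j := by
          apply Finset.single_le_sum (f := fun j => A i j * x j)
          · intro k _
            rcases hA i k with h | h <;> rcases hx01 k with hk | hk <;>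
              rw [h, hk] <;> norm_num
          · exact Finset.mem_univ j
  have := hvalid x hx01 hfeas
  have hz : ∑ j ∈ T, α j * x j = 0 := by
    apply Finset.sum_eq_zero
    intro j hj; simp [hx, hj]
  rw [hz] at this
  linarith
end

section
/- Suppose Σ_{j∈T} α_j x_j ≥ α₀ (with T ⊆ {1,…,n}) is a valid inequality for Σ(A) with α_j ≥ 0 for all j ∈ T and α₀ > 0, and let k ∈ T satisfy α_k < α₀. Then there is a row i of A whose support S_i satisfies S_i ⊆ T ∖ {k}. -/
open Finset

/-- If Σ_{j∈T} α_j x_j ≥ α₀ is valid for the set covering set Σ(A),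
with α_j ≥ 0 on T, α₀ > 0, and k ∈ T has α_k < α₀, then some row of A has its
support contained in T ∖ {k}. -/
theorem stmt_3 (m n : ℕ) (hm : 0 < m) (hn : 0 < n)
    (A : Fin m → Fin n → ℝ) (hA : ∀ i j, A i j = 0 ∨ A i j = 1)
    (T : Finset (Fin n)) (α : Fin n → ℝ) (α0 : ℝ)
    (hα : ∀ j ∈ T, 0 ≤ α j) (hα0 : 0 < α0)
    (k : Fin n) (hk : k ∈ T) (hαk : α k < α0)
    (hvalid : ∀ x : Fin n → ℝ, (∀ j, x j = 0 ∨ x j = 1) →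
        (∀ i, (1 : ℝ) ≤ ∑ j, A i j * x j) → α0 ≤ ∑ j ∈ T, α j * x j) :
    ∃ i : Fin m, ∀ j : Fin n, A i j = 1 → j ∈ T.erase k := by
  by_contra h
  push_neg at h
  set x : Fin n → ℝ := fun j => if j ∈ T.erase k then 0 else 1 with hx
  have hx01 : ∀ j, x j = 0 ∨ x j = 1 := by
    intro j; simp only [hx]; split <;> simp
  have hcov : ∀ i, (1 : ℝ) ≤ ∑ j, A i j * x j := by
    intro i
    obtain ⟨j, hj1, hj2⟩ := h i
    have hxj : x j = 1 := by simp only [hx]; rw [if_neg hj2]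
    have : A i j * x j = 1 := by rw [hj1, hxj]; ring
    calc (1:ℝ) = A i j * x j := this.symm
      _ ≤ ∑ j, A i j * x j := by
        apply Finset.single_le_sum (f := fun j => A i j * x j)
        · intro l _
          rcases hA i l with h0 | h0 <;> rcases hx01 l with h1 | h1 <;> simp [h0, h1]
        · exact Finset.mem_univ j
  have := hvalid x hx01 hcov
  have hsum : ∑ j ∈ T, α j * x j = α k := by
    rw [← Finset.add_sum_erase _ _ hk]
    have : ∀ j ∈ T.erase k, α j * x j = 0 := by
      intro j hj; simp only [hx]; rw [if_pos hj, mul_zero]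
    rw [Finset.sum_eq_zero this]
    have : x k = 1 := by simp only [hx]; rw [if_neg (Finset.notMem_erase k T)]
    rw [this]; ring
  rw [hsum] at this
  linarith
end

section
/- Let i be a row of A with support S_i = {j_1, …, j_{|S_i|}} (in a fixed enumeration). Let y ∈ [0,1]^n satisfy Ay ≥ e and suppose for some 1 ≤ t ≤ |S_i| we have y_{j_t} = 1 and y_{j_h} = 0 for all 1 ≤ h < t. Then y satisfies every inequality Σ_{j∈T} α_j x_j ≥ α₀ that is valid for Σ(A), has α_j > 0 for all j ∈ T, has pitch ≤ 2, and satisfies S_i ⊆ T. -/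
open Finset

/-- The inequality α^T x ≥ α₀ (α ≥ 0) has pitch ≤ p: p is at most the number of
positive entries of α, and the p smallest positive entries of α (with multiplicity)
sum to at least α₀ — equivalently, every p-element subset of the support of α has
coefficient sum at least α₀. -/
def pitchLe (n : ℕ) (α : Fin n → ℝ) (α0 : ℝ) (p : ℕ) : Prop :=
  p ≤ (Finset.univ.filter (fun j => 0 < α j)).card ∧
    ∀ P : Finset (Fin n), (∀ j ∈ P, 0 < α j) → P.card = p → α0 ≤ ∑ j ∈ P, α j

/-- a point y ∈ [0,1]^n with Ay ≥ e satisfying the vector-branching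
fixing for row i (at position t of the enumeration of S_i) satisfies every valid
inequality of pitch ≤ 2 whose support contains S_i. -/
theorem stmt_5 (m n : ℕ) (hm : 0 < m) (hn : 0 < n)
    (A : Fin m → Fin n → ℝ) (hA : ∀ i j, A i j = 0 ∨ A i j = 1)
    (i : Fin m) (s : ℕ) (e : Fin s → Fin n) (he : Function.Injective e)
    (hrange : ∀ j, A i j = 1 ↔ ∃ t, e t = j)
    (y : Fin n → ℝ) (hy : ∀ j, 0 ≤ y j ∧ y j ≤ 1)
    (hAy : ∀ i' : Fin m, (1 : ℝ) ≤ ∑ j, A i' j * y j)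
    (t : Fin s) (ht1 : y (e t) = 1) (ht0 : ∀ h : Fin s, h < t → y (e h) = 0)
    (T : Finset (Fin n)) (α : Fin n → ℝ) (α0 : ℝ)
    (hpos : ∀ j ∈ T, 0 < α j) (hzero : ∀ j ∉ T, α j = 0)
    (hvalid : ∀ x : Fin n → ℝ, (∀ j, x j = 0 ∨ x j = 1) →
        (∀ i' : Fin m, (1 : ℝ) ≤ ∑ j, A i' j * x j) → α0 ≤ ∑ j ∈ T, α j * x j)
    (hpitch : pitchLe n α α0 2)
    (hsub : ∀ j : Fin n, A i j = 1 → j ∈ T) :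
    α0 ≤ ∑ j ∈ T, α j * y j := by
  have hetT : e t ∈ T := hsub _ ((hrange (e t)).mpr ⟨t, rfl⟩)
  have hterms : ∀ j ∈ T, 0 ≤ α j * y j := fun j hj => mul_nonneg (hpos j hj).le (hy j).1
  have hsplit : ∑ j ∈ T, α j * y j = α (e t) * y (e t) + ∑ j ∈ T.erase (e t), α j * y j :=
    (Finset.add_sum_erase T _ hetT).symm
  have herasenn : 0 ≤ ∑ j ∈ T.erase (e t), α j * y j :=
    Finset.sum_nonneg fun j hj => hterms j (Finset.mem_of_mem_erase hj)
  by_cases hcase : α0 ≤ α (e t)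
  · rw [hsplit, ht1, mul_one]; linarith
  push_neg at hcase
  by_cases hsum : 1 ≤ ∑ j ∈ T.erase (e t), y j
  · have hαj : ∀ j ∈ T.erase (e t), α0 - α (e t) ≤ α j := by
      intro j hj
      have hjT := Finset.mem_of_mem_erase hj
      have hne : j ≠ e t := Finset.ne_of_mem_erase hj
      have h2 := hpitch.2 {j, e t} (by
        intro k hk
        simp only [Finset.mem_insert, Finset.mem_singleton] at hk
        rcases hk with rfl | rfl
        · exact hpos _ hjT
        · exact hpos _ hetT)
        (by rw [Finset.card_insert_of_notMem (by simpa using hne), Finset.card_singleton])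
      rw [Finset.sum_pair hne] at h2
      linarith
    have hlow : (α0 - α (e t)) * 1 ≤ ∑ j ∈ T.erase (e t), α j * y j := by
      calc (α0 - α (e t)) * 1 ≤ (α0 - α (e t)) * ∑ j ∈ T.erase (e t), y j :=
            mul_le_mul_of_nonneg_left hsum (by linarith)
        _ = ∑ j ∈ T.erase (e t), (α0 - α (e t)) * y j := Finset.mul_sum _ _ _
        _ ≤ ∑ j ∈ T.erase (e t), α j * y j :=
            Finset.sum_le_sum fun j hj => mul_le_mul_of_nonneg_right (hαj j hj) (hy _).1
    rw [hsplit, ht1, mul_one]; linarith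
  · push_neg at hsum
    exfalso
    set x : Fin n → ℝ := fun j => if j = e t ∨ j ∉ T then 1 else 0 with hx
    have hx01 : ∀ j, x j = 0 ∨ x j = 1 := by
      intro j; by_cases h : j = e t ∨ j ∉ T <;> simp [hx, h]
    have hcover : ∀ i' : Fin m, (1 : ℝ) ≤ ∑ j, A i' j * x j := by
      intro i'
      have key : ∃ j, A i' j = 1 ∧ x j = 1 := by
        by_contra hno
        push_neg at hno
        have hbound : ∑ j, A i' j * y j ≤ ∑ j, (if j ∈ T.erase (e t) then y j else 0) := by
          apply Finset.sum_le_sum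
          intro j _
          rcases hA i' j with h0 | h1
          · rw [h0, zero_mul]
            split
            · exact (hy j).1
            · exact le_rfl
          · have hx0 : x j = 0 := (hx01 j).resolve_right (fun h => hno j h1 h)
            have hq : ¬ (j = e t ∨ j ∉ T) := by
              intro h; simp [hx, h] at hx0
            push_neg at hq
            rw [h1, one_mul, if_pos (Finset.mem_erase.mpr ⟨hq.1, hq.2⟩)]
        rw [Finset.sum_ite_mem, Finset.univ_inter] at hbound
        have := hAy i'
        linarith
      obtain ⟨j0, hj1, hj2⟩ := key
      calc (1 : ℝ) = A i' j0 * x j0 := by rw [hj1, hj2, one_mul]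
        _ ≤ ∑ j, A i' j * x j := by
            apply Finset.single_le_sum (fun j _ => ?_) (Finset.mem_univ j0)
            exact mul_nonneg (by rcases hA i' j with h | h <;> rw [h] <;> norm_num)
              (by rcases hx01 j with h | h <;> rw [h] <;> norm_num)
    have hval := hvalid x hx01 hcover
    have hxet : x (e t) = 1 := by simp [hx]
    have hsumx : ∑ j ∈ T, α j * x j = α (e t) := by
      rw [Finset.sum_eq_single_of_mem (e t) hetT]
      · rw [hxet, mul_one]
      · intro j hj hne
        have : x j = 0 := by
          simp only [hx]
          rw [if_neg]; push_neg; exact ⟨hne, hj⟩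
        rw [this, mul_zero]
    rw [hsumx] at hval
    linarith
end

section
/- (Lemma 7, projected form.) Let π ≥ 1 be an integer and let x̃ ∈ M^π. Then x̃ satisfies every inequality α^T x ≥ α₀ with α ≥ 0 that is valid for Σ(A) = {x ∈ {0,1}^n : Ax ≥ e} and has pitch ≤ π. -/
open Finset

/-- The sets M^π of the paper, with the index shifted down by one:
`Mlevel m n A s e p` is M^{p+1}. `Mlevel ... 0` = M^1 is the LP relaxation
{x ∈ [0,1]^n : Ax ≥ e}. Here e i : Fin (s i) → Fin n is the fixed enumeration of
the support S_i of row i. -/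
def Mlevel (m n : ℕ) (A : Fin m → Fin n → ℝ) (s : Fin m → ℕ)
    (e : (i : Fin m) → Fin (s i) → Fin n) : ℕ → Set (Fin n → ℝ)
  | 0 => {x | (∀ j, 0 ≤ x j ∧ x j ≤ 1) ∧ ∀ i : Fin m, (1 : ℝ) ≤ ∑ j, A i j * x j}
  | p + 1 =>
      ⋂ i : Fin m, convexHull ℝ
        (⋃ t : Fin (s i),
          {x | x ∈ Mlevel m n A s e p ∧ x (e i t) = 1 ∧
            ∀ h : Fin (s i), h < t → x (e i h) = 0})

/-- Splitting off the coordinate `j0` from the sum. -/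
private lemma sum_split (n : ℕ) (α : Fin n → ℝ) (j0 : Fin n) (z : Fin n → ℝ) :
    ∑ j, α j * z j = (∑ j, Function.update α j0 0 j * z j) + α j0 * z j0 := by
  have h1 : (∑ j, Function.update α j0 0 j * z j)
      = ∑ j ∈ Finset.univ.erase j0, α j * z j := by
    rw [← Finset.sum_erase (Finset.univ)
      (f := fun j => Function.update α j0 0 j * z j)
      (by simp : Function.update α j0 0 j0 * z j0 = 0)]
    refine Finset.sum_congr rfl fun j hj => ?_
    rw [Function.update_of_ne (Finset.ne_of_mem_erase hj)]
  rw [h1, Finset.sum_erase_add _ _ (Finset.mem_univ j0)]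

/-- If α0 > 0, some row of A has its support inside the support of α. -/
private lemma exists_row (m n : ℕ) (A : Fin m → Fin n → ℝ)
    (hA : ∀ i j, A i j = 0 ∨ A i j = 1)
    (α : Fin n → ℝ) (α0 : ℝ) (hα0 : 0 < α0) (hα : ∀ j, 0 ≤ α j)
    (hvalid : ∀ z : Fin n → ℝ, (∀ j, z j = 0 ∨ z j = 1) →
        (∀ i : Fin m, (1 : ℝ) ≤ ∑ j, A i j * z j) → α0 ≤ ∑ j, α j * z j) :
    ∃ i, ∀ j, A i j = 1 → 0 < α j := by
  by_contra hc
  push_neg at hc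
  set z : Fin n → ℝ := fun j => if 0 < α j then 0 else 1 with hz
  have hz01 : ∀ j, z j = 0 ∨ z j = 1 := fun j => by
    by_cases h : 0 < α j <;> simp [hz, h]
  have hzA : ∀ i, (1:ℝ) ≤ ∑ j, A i j * z j := by
    intro i
    obtain ⟨j, hA1, hαj⟩ := hc i
    have hle : A i j * z j = 1 := by simp [hz, hαj, hA1]
    have hterm : ∀ j', 0 ≤ A i j' * z j' := by
      intro j'
      rcases hA i j' with h | h <;> rcases hz01 j' with h' | h' <;> simp [h, h']
    have := Finset.single_le_sum (fun j' _ => hterm j') (Finset.mem_univ j)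
    linarith
  have hv := hvalid z hz01 hzA
  have hzero : ∑ j, α j * z j = 0 := Finset.sum_eq_zero fun j _ => by
    by_cases h : 0 < α j
    · simp [hz, h]
    · have : α j = 0 := le_antisymm (not_lt.mp h) (hα j)
      simp [this]
  linarith

private lemma convex_halfspace' (n : ℕ) (α : Fin n → ℝ) (α0 : ℝ) :
    Convex ℝ {y : Fin n → ℝ | α0 ≤ ∑ j, α j * y j} := by
  intro y hy z hz a b ha hb hab
  simp only [Set.mem_setOf_eq] at *
  have hsum : ∑ j, α j * (a • y + b • z) j
      = a * ∑ j, α j * y j + b * ∑ j, α j * z j := by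
    rw [Finset.mul_sum, Finset.mul_sum, ← Finset.sum_add_distrib]
    refine Finset.sum_congr rfl fun j _ => ?_
    simp only [Pi.add_apply, Pi.smul_apply, smul_eq_mul]
    ring
  rw [hsum]
  have h1 : a * α0 ≤ a * ∑ j, α j * y j := mul_le_mul_of_nonneg_left hy ha
  have h2 : b * α0 ≤ b * ∑ j, α j * z j := mul_le_mul_of_nonneg_left hz hb
  have h3 : a * α0 + b * α0 = α0 := by rw [← add_mul, hab, one_mul]
  linarith

private lemma Mlevel_bounds (m n : ℕ) (hm : 0 < m) (A : Fin m → Fin n → ℝ)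
    (s : Fin m → ℕ) (e : (i : Fin m) → Fin (s i) → Fin n) :
    ∀ p, ∀ x ∈ Mlevel m n A s e p, ∀ j, 0 ≤ x j ∧ x j ≤ 1 := by
  intro p
  induction p with
  | zero => intro x hx j; simp only [Mlevel] at hx; exact hx.1 j
  | succ p ih =>
    intro x hx
    simp only [Mlevel, Set.mem_iInter] at hx
    have hx' := hx ⟨0, hm⟩
    have hconv : Convex ℝ {y : Fin n → ℝ | ∀ j, 0 ≤ y j ∧ y j ≤ 1} := by
      intro y hy z hz a b ha hb hab
      intro j
      have h1 := (hy j).1; have h2 := (hy j).2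
      have h3 := (hz j).1; have h4 := (hz j).2
      simp only [Pi.add_apply, Pi.smul_apply, smul_eq_mul]
      constructor <;> nlinarith
    refine convexHull_min ?_ hconv hx'
    intro y hy
    rw [Set.mem_iUnion] at hy
    obtain ⟨t, hyM⟩ := hy
    exact ih y hyM.1

/-- for π ≥ 1 (here π = p+1), every x̃ ∈ M^π satisfies every
inequality α^T x ≥ α₀ with α ≥ 0 that is valid for Σ(A) and has pitch ≤ π. -/
theorem stmt_8 (m n : ℕ) (hm : 0 < m) (hn : 0 < n)
    (A : Fin m → Fin n → ℝ) (hA : ∀ i j, A i j = 0 ∨ A i j = 1)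
    (s : Fin m → ℕ) (e : (i : Fin m) → Fin (s i) → Fin n)
    (he : ∀ i, Function.Injective (e i))
    (hrange : ∀ i j, A i j = 1 ↔ ∃ t, e i t = j)
    (p : ℕ) (x : Fin n → ℝ) (hx : x ∈ Mlevel m n A s e p)
    (α : Fin n → ℝ) (α0 : ℝ) (hα : ∀ j, 0 ≤ α j)
    (hvalid : ∀ z : Fin n → ℝ, (∀ j, z j = 0 ∨ z j = 1) →
        (∀ i : Fin m, (1 : ℝ) ≤ ∑ j, A i j * z j) → α0 ≤ ∑ j, α j * z j)
    (hpitch : pitchLe n α α0 (p + 1)) :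
    α0 ≤ ∑ j, α j * x j := by
  induction p generalizing x α α0 hα hvalid with
  | zero =>
    simp only [Mlevel] at hx
    rcases le_or_gt α0 0 with h0 | h0
    · have : 0 ≤ ∑ j, α j * x j :=
        Finset.sum_nonneg fun j _ => mul_nonneg (hα j) (hx.1 j).1
      linarith
    · obtain ⟨i, hi⟩ := exists_row m n A hA α α0 h0 hα hvalid
      have h1 : (1:ℝ) ≤ ∑ j, A i j * x j := hx.2 i
      have hterm : ∀ j, α0 * (A i j * x j) ≤ α j * x j := by
        intro j
        rcases hA i j with h | h
        · simp only [h, mul_zero, zero_mul]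
          exact mul_nonneg (hα j) (hx.1 j).1
        · have hαj := hi j h
          have hα0le : α0 ≤ α j := by
            have := hpitch.2 {j} (by simp [hαj]) (by simp)
            simpa using this
          have hxj := (hx.1 j).1
          rw [h]; nlinarith
      calc α0 = α0 * 1 := by ring
        _ ≤ α0 * ∑ j, A i j * x j := by nlinarith
        _ = ∑ j, α0 * (A i j * x j) := by rw [Finset.mul_sum]
        _ ≤ ∑ j, α j * x j := Finset.sum_le_sum fun j _ => hterm j
  | succ p ih =>
    rcases le_or_gt α0 0 with h0 | h0
    · have hb := Mlevel_bounds m n hm A s e _ x hx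
      have : 0 ≤ ∑ j, α j * x j :=
        Finset.sum_nonneg fun j _ => mul_nonneg (hα j) (hb j).1
      linarith
    obtain ⟨i, hi⟩ := exists_row m n A hA α α0 h0 hα hvalid
    simp only [Mlevel, Set.mem_iInter] at hx
    have hx' := hx i
    have key : (⋃ t : Fin (s i),
        {y : Fin n → ℝ | y ∈ Mlevel m n A s e p ∧ y (e i t) = 1 ∧
          ∀ h : Fin (s i), h < t → y (e i h) = 0})
        ⊆ {y : Fin n → ℝ | α0 ≤ ∑ j, α j * y j} := by
      intro y hy
      rw [Set.mem_iUnion] at hy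
      obtain ⟨t, hyM, hy1, -⟩ := hy
      set j0 := e i t with hj0
      have hAj0 : A i j0 = 1 := (hrange i j0).mpr ⟨t, rfl⟩
      have hαj0 : 0 < α j0 := hi j0 hAj0
      set α' := Function.update α j0 0 with hα'def
      have hα' : ∀ j, 0 ≤ α' j := by
        intro j
        rw [hα'def, Function.update_apply]
        split
        · exact le_refl 0
        · exact hα j
      -- validity of the reduced inequality
      have hvalid' : ∀ z : Fin n → ℝ, (∀ j, z j = 0 ∨ z j = 1) →
          (∀ i' : Fin m, (1 : ℝ) ≤ ∑ j, A i' j * z j) →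
          α0 - α j0 ≤ ∑ j, α' j * z j := by
        intro z hz01 hzA
        set z' := Function.update z j0 1 with hz'def
        have hz'01 : ∀ j, z' j = 0 ∨ z' j = 1 := by
          intro j
          rw [hz'def, Function.update_apply]
          split
          · exact Or.inr rfl
          · exact hz01 j
        have hz'A : ∀ i' : Fin m, (1:ℝ) ≤ ∑ j, A i' j * z' j := by
          intro i'
          refine le_trans (hzA i') (Finset.sum_le_sum fun j _ => ?_)
          have hAnn : 0 ≤ A i' j := by rcases hA i' j with h | h <;> simp [h]
          have hle : z j ≤ z' j := by
            rw [hz'def, Function.update_apply]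
            split
            · rcases hz01 j with h | h <;> simp [h]
            · exact le_refl _
          exact mul_le_mul_of_nonneg_left hle hAnn
        have hv := hvalid z' hz'01 hz'A
        have hs := sum_split n α j0 z'
        have hz'j0 : z' j0 = 1 := by rw [hz'def, Function.update_self]
        have heq : (∑ j, α' j * z' j) = ∑ j, α' j * z j := by
          refine Finset.sum_congr rfl fun j _ => ?_
          by_cases h : j = j0
          · subst h
            rw [hα'def, Function.update_self]; ring
          · rw [hz'def, Function.update_of_ne h]
        rw [hs, hz'j0, mul_one, heq] at hv
        linarith
      -- pitch of the reduced inequality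
      have hpitch' : pitchLe n α' (α0 - α j0) (p + 1) := by
        constructor
        · have hset : (Finset.univ.filter (fun j => 0 < α' j))
              = (Finset.univ.filter (fun j => 0 < α j)).erase j0 := by
            ext j
            simp only [Finset.mem_filter, Finset.mem_erase, Finset.mem_univ,
              true_and, hα'def, Function.update_apply]
            by_cases h : j = j0 <;> simp [h]
          have hj0mem : j0 ∈ Finset.univ.filter (fun j => 0 < α j) := by
            simp [hαj0]
          have hcard := hpitch.1
          rw [hset, Finset.card_erase_of_mem hj0mem]
          omega
        · intro P' hP' hcard
          have hj0P' : j0 ∉ P' := by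
            intro h
            have := hP' j0 h
            rw [hα'def, Function.update_self] at this
            exact lt_irrefl 0 this
          have hall : ∀ j ∈ insert j0 P', 0 < α j := by
            intro j hj
            rcases Finset.mem_insert.mp hj with h | h
            · subst h; exact hαj0
            · have := hP' j h
              rwa [hα'def, Function.update_of_ne (by rintro rfl; exact hj0P' h)] at this
          have hcardP : (insert j0 P').card = p + 1 + 1 := by
            rw [Finset.card_insert_of_notMem hj0P', hcard]
          have := hpitch.2 (insert j0 P') hall hcardP
          rw [Finset.sum_insert hj0P'] at this
          have heq : ∑ j ∈ P', α j = ∑ j ∈ P', α' j := by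
            refine Finset.sum_congr rfl fun j hj => ?_
            rw [hα'def, Function.update_of_ne (by rintro rfl; exact hj0P' hj)]
          linarith
      have hIH := ih y hyM α' (α0 - α j0) hα' hvalid' hpitch'
      have hs := sum_split n α j0 y
      rw [Set.mem_setOf_eq]
      rw [hs, hy1, mul_one]
      linarith
    exact convexHull_min key (convex_halfspace' n α α0) hx'
end

section
/- (Constructive form of Theorem 6.) Let P be a positive integer and suppose Σ_{j=1}^n α_j x_j ≥ α₀ is valid for Π with α_j ∈ {0,1,…,P} for all j and α₀ ≤ P. Suppose for some integer k ≥ 2 we have Σ_{h∈δ(k)} α_h ≥ P − 1, and let i attain the minimum of w_j over {j : α_j = k}. Define α'_j = α_j for j ≠ i and α'_i = k − 1. Then Σ_{j=1}^n α'_j x_j ≥ α₀ is valid for Π. -/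
open Finset

/-- The inequality Σ α_j x_j ≥ α₀ (α ∈ ℕ^n) is valid for the minimum-knapsack set
Π = {x ∈ {0,1}^n : Σ w_j x_j ≥ w₀}. -/
def knapValid (n : ℕ) (w : Fin n → ℕ) (w0 : ℕ) (α : Fin n → ℕ) (α0 : ℕ) : Prop :=
  ∀ x : Fin n → ℝ, (∀ j, x j = 0 ∨ x j = 1) →
    (w0 : ℝ) ≤ ∑ j, (w j : ℝ) * x j → (α0 : ℝ) ≤ ∑ j, (α j : ℝ) * x j

/-- The drag δ(k) of a value k for the inequality with coefficients α:
δ(k) = {h : w_h ≥ min{w_j : α_j = k} and 0 < α_h < k} (empty when no j has α_j = k).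
The condition w_h ≥ min{w_j : α_j = k} is expressed as ∃ j, α_j = k ∧ w_j ≤ w_h. -/
def dragSet (n : ℕ) (w : Fin n → ℕ) (α : Fin n → ℕ) (k : ℕ) : Finset (Fin n) :=
  Finset.univ.filter (fun h => (∃ j, α j = k ∧ w j ≤ w h) ∧ 0 < α h ∧ α h < k)

/-!
Test the lowered inequality on a cover `S`. If `i ∉ S` nothing changes. Otherwise write
`S = {i} ∪ R`. If `R` contains the whole drag `δ(k)`, then the left side is at least
`(k - 1) + Σ_{δ(k)} α_h ≥ 1 + (P - 1) ≥ α₀`. If some `h ∈ δ(k)` is missing from `R`, then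
`w_h ≥ w_i` by minimality of `w_i`, so `{h} ∪ R` is again a cover, and validity of the original
inequality gives `α₀ ≤ α_h + Σ_R α ≤ (k - 1) + Σ_R α`.
-/

lemma sum_natCast_mul_indicator_eq {ι : Type*} [Fintype ι] [DecidableEq ι] (c : ι → ℕ)
    (T : Finset ι) :
    ∑ j, (c j : ℝ) * (if j ∈ T then 1 else 0) = ((∑ j ∈ T, c j : ℕ) : ℝ) := by
  simp [mul_ite]

lemma knapValid_iff_forall_finset {n : ℕ} {w : Fin n → ℕ} {w0 : ℕ} {α : Fin n → ℕ}
    {α0 : ℕ} :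
    knapValid n w w0 α α0 ↔ ∀ S : Finset (Fin n), w0 ≤ ∑ j ∈ S, w j → α0 ≤ ∑ j ∈ S, α j := by
  constructor
  · intro hvalid S hS
    have h := hvalid (fun j => if j ∈ S then 1 else 0) (fun j => by split_ifs <;> simp)
      (by rw [sum_natCast_mul_indicator_eq]; exact_mod_cast hS)
    rw [sum_natCast_mul_indicator_eq] at h
    exact_mod_cast h
  · intro hvalid x hx hxw
    have hx_eq : x = fun j => if j ∈ univ.filter (fun j => x j = 1) then 1 else 0 := by
      funext j
      rcases hx j with h | h <;> simp [h]
    rw [hx_eq, sum_natCast_mul_indicator_eq] at hxw ⊢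
    exact_mod_cast hvalid _ (by exact_mod_cast hxw)

lemma le_add_sum_of_drag {ι : Type*} [DecidableEq ι] {w α : ι → ℕ} {w0 α0 : ℕ}
    (hvalid : ∀ S : Finset ι, w0 ≤ ∑ j ∈ S, w j → α0 ≤ ∑ j ∈ S, α j)
    {D R : Finset ι} {i : ι} {m : ℕ} (hm : 1 ≤ m) (hD : α0 ≤ ∑ h ∈ D, α h + 1)
    (hDw : ∀ h ∈ D, w i ≤ w h ∧ α h ≤ m) (hR : w0 ≤ w i + ∑ j ∈ R, w j) :
    α0 ≤ m + ∑ j ∈ R, α j := by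
  by_cases hDR : D ⊆ R
  · calc α0 ≤ ∑ h ∈ D, α h + 1 := hD
      _ ≤ ∑ j ∈ R, α j + m := add_le_add (sum_le_sum_of_subset hDR) hm
      _ = m + ∑ j ∈ R, α j := add_comm _ _
  · obtain ⟨h, hhD, hhR⟩ := not_subset.mp hDR
    obtain ⟨hwh, hαh⟩ := hDw h hhD
    have hcover : w0 ≤ ∑ j ∈ insert h R, w j := by
      rw [sum_insert hhR]
      omega
    have := hvalid _ hcover
    rw [sum_insert hhR] at this
    omega

lemma mem_dragSet_bounds {n : ℕ} {w α : Fin n → ℕ} {k : ℕ} {i h : Fin n}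
    (himin : ∀ j, α j = k → w i ≤ w j) (hh : h ∈ dragSet n w α k) :
    w i ≤ w h ∧ α h ≤ k - 1 := by
  obtain ⟨⟨j, hjk, hjh⟩, -, hhk⟩ := (mem_filter.mp hh).2
  exact ⟨(himin j hjk).trans hjh, by omega⟩

theorem stmt_10_general (n : ℕ) (w : Fin n → ℕ) (w0 : ℕ)
    (P : ℕ)
    (α : Fin n → ℕ) (α0 : ℕ) (hα0 : α0 ≤ P)
    (hvalid : knapValid n w w0 α α0)
    (k : ℕ) (hk : 2 ≤ k)
    (hdrag : (P : ℤ) - 1 ≤ ∑ h ∈ dragSet n w α k, (α h : ℤ))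
    (i : Fin n) (himin : ∀ j, α j = k → w i ≤ w j) :
    knapValid n w w0 (fun j => if j = i then k - 1 else α j) α0 := by
  have hupdate : (fun j => if j = i then k - 1 else α j) = Function.update α i (k - 1) := by
    funext j
    rw [Function.update_apply]
  rw [hupdate, knapValid_iff_forall_finset]
  rw [knapValid_iff_forall_finset] at hvalid
  intro S hS
  by_cases hi : i ∈ S
  · rw [sum_update_of_mem hi, sdiff_singleton_eq_erase]
    refine le_add_sum_of_drag hvalid (by omega) ?_ (fun h hh => mem_dragSet_bounds himin hh) ?_
    · rw [← Nat.cast_sum] at hdrag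
      omega
    · rwa [add_sum_erase S w hi]
  · rw [sum_update_of_notMem hi]
    exact hvalid S hS

/-- constructive form of Theorem 6: if Σ α_j x_j ≥ α₀ is valid for Π
with coefficients in {0,…,P}, α₀ ≤ P, and for some k ≥ 2 we have
Σ_{h∈δ(k)} α_h ≥ P − 1, then lowering the coefficient of a w-minimal index i with
α_i = k from k to k−1 keeps the inequality valid for Π. -/
theorem stmt_10 (n : ℕ) (hn : 0 < n) (w : Fin n → ℕ) (w0 : ℕ)
    (hw : ∀ j, w j ≤ w0) (P : ℕ) (hP : 0 < P)
    (α : Fin n → ℕ) (α0 : ℕ) (hαP : ∀ j, α j ≤ P) (hα0 : α0 ≤ P)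
    (hvalid : knapValid n w w0 α α0)
    (k : ℕ) (hk : 2 ≤ k)
    (hdrag : (P : ℤ) - 1 ≤ ∑ h ∈ dragSet n w α k, (α h : ℤ))
    (i : Fin n) (hik : α i = k) (himin : ∀ j, α j = k → w i ≤ w j) :
    knapValid n w w0 (fun j => if j = i then k - 1 else α j) α0 :=
  stmt_10_general n w w0 P α α0 hα0 hvalid k hk hdrag i himin
end

section
/- Let S₁, S₂ ⊆ {1,…,n} be disjoint with S₂ ≠ ∅, and suppose the inequality x(S₁) + 2·x(S₂) ≥ 2 is valid for Π and is not strictly dominated by any valid inequality β^T x ≥ 2 for Π with β_j ∈ {0,1,2} for all j (i.e., no such valid β with β ≤ α componentwise and β ≠ α, where α is the coefficient vector of the given inequality). Then w_h < w_k for every h ∈ S₁ and every k ∈ S₂. -/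
open Finset

/-- if x(S₁) + 2x(S₂) ≥ 2 (S₁, S₂ disjoint, S₂ ≠ ∅) is valid for Π
and not strictly dominated by any valid inequality β^T x ≥ 2 with β ∈ {0,1,2}^n,
then w_h < w_k for every h ∈ S₁ and k ∈ S₂. -/
theorem stmt_11 (n : ℕ) (hn : 0 < n) (w : Fin n → ℕ) (w0 : ℕ)
    (hw : ∀ j, w j ≤ w0)
    (S1 S2 : Finset (Fin n)) (hdisj : Disjoint S1 S2) (hS2 : S2.Nonempty)
    (α : Fin n → ℕ)
    (hα : α = fun j => if j ∈ S1 then 1 else if j ∈ S2 then 2 else 0)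
    (hvalid : knapValid n w w0 α 2)
    (hundom : ¬ ∃ β : Fin n → ℕ, (∀ j, β j ≤ 2) ∧ knapValid n w w0 β 2 ∧
        (∀ j, β j ≤ α j) ∧ β ≠ α) :
    ∀ h ∈ S1, ∀ k ∈ S2, w h < w k := by
  by_contra hcon
  push_neg at hcon
  obtain ⟨h, hh, k, hk, hwk⟩ := hcon
  have hkS1 : k ∉ S1 := Finset.disjoint_right.mp hdisj hk
  have hhk : h ≠ k := fun e => hkS1 (e ▸ hh)
  have hαk : α k = 2 := by simp [hα, hkS1, hk]
  have hαh : α h = 1 := by simp [hα, hh]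
  set β : Fin n → ℕ := fun j => if j = k then 1 else α j with hβ
  apply hundom
  refine ⟨β, ?_, ?_, ?_, ?_⟩
  · intro j
    by_cases hjk : j = k
    · simp [hβ, hjk]
    · simp only [hβ, hjk, if_false, hα]
      split_ifs <;> omega
  · intro x hx hwx
    by_contra hlt
    push_neg at hlt
    push_cast at hlt
    have hαx : (2:ℝ) ≤ ∑ j, (α j : ℝ) * x j := hvalid x hx hwx
    have hdiff : ∑ j, (α j : ℝ) * x j - ∑ j, (β j : ℝ) * x j = x k := by
      rw [← Finset.sum_sub_distrib, Finset.sum_eq_single k]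
      · simp [hβ, hαk]; ring
      · intro j _ hjk
        simp [hβ, hjk]
      · simp
    have hxk : x k = 1 := by
      rcases hx k with h0 | h1
      · rw [h0] at hdiff; linarith
      · exact h1
    have hzero : ∀ j, j ≠ k → (j ∈ S1 ∨ j ∈ S2) → x j = 0 := by
      intro j hjk hjm
      by_contra hne
      have hxj : x j = 1 := (hx j).resolve_left hne
      have hβj : 1 ≤ β j := by
        simp only [hβ, hjk, if_false, hα]
        rcases hjm with hm | hm <;> split_ifs <;> omega
      have hsub : ({k, j} : Finset (Fin n)) ⊆ Finset.univ := Finset.subset_univ _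
      have hnn : ∀ i ∈ Finset.univ, i ∉ ({k, j} : Finset (Fin n)) → (0:ℝ) ≤ (β i : ℝ) * x i := by
        intro i _ _
        rcases hx i with h0 | h1
        · rw [h0]; simp
        · rw [h1]; simp
      have hle := Finset.sum_le_sum_of_subset_of_nonneg hsub hnn
      rw [Finset.sum_pair (Ne.symm hjk)] at hle
      have hβk : β k = 1 := by simp [hβ]
      have h1le : (1:ℝ) ≤ (β j : ℝ) := by exact_mod_cast hβj
      rw [hβk, hxk, hxj] at hle
      push_cast at hle
      linarith
    have hxh : x h = 0 := hzero h hhk (Or.inl hh)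
    set x' : Fin n → ℝ := fun j => if j = k then 0 else if j = h then 1 else x j with hx'
    have hx'01 : ∀ j, x' j = 0 ∨ x' j = 1 := by
      intro j
      simp only [hx']
      split_ifs
      · left; rfl
      · right; rfl
      · exact hx j
    have key : ∑ j, (w j : ℝ) * x' j = ∑ j, (w j : ℝ) * x j + ((w h : ℝ) - (w k : ℝ)) := by
      have hd : ∑ j, ((w j : ℝ) * x' j - (w j : ℝ) * x j) = (w h : ℝ) - (w k : ℝ) := by
        rw [← Finset.sum_subset (Finset.subset_univ ({h, k} : Finset (Fin n)))
          (by
            intro j _ hj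
            simp only [Finset.mem_insert, Finset.mem_singleton] at hj
            push_neg at hj
            have : x' j = x j := by simp [hx', hj.1, hj.2]
            rw [this]; ring)]
        rw [Finset.sum_pair hhk]
        have h1 : x' h = 1 := by simp [hx', hhk]
        have h2 : x' k = 0 := by simp [hx']
        rw [h1, h2, hxh, hxk]; ring
      rw [Finset.sum_sub_distrib] at hd
      linarith
    have hwx' : (w0 : ℝ) ≤ ∑ j, (w j : ℝ) * x' j := by
      rw [key]
      have : (w k : ℝ) ≤ (w h : ℝ) := by exact_mod_cast hwk
      linarith
    have hval' := hvalid x' hx'01 hwx'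
    push_cast at hval'
    have hαx' : ∑ j, (α j : ℝ) * x' j = 1 := by
      rw [Finset.sum_eq_single h]
      · have h1 : x' h = 1 := by simp [hx', hhk]
        rw [h1, hαh]; norm_num
      · intro j _ hjh
        by_cases hjk : j = k
        · simp [hx', hjk]
        · by_cases hjm : j ∈ S1 ∨ j ∈ S2
          · have := hzero j hjk hjm
            simp [hx', hjk, hjh, this]
          · push_neg at hjm
            have : α j = 0 := by simp [hα, hjm.1, hjm.2]
            simp [this]
      · simp
    linarith
  · intro j
    by_cases hjk : j = k
    · subst hjk; simp [hβ, hαk]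
    · simp [hβ, hjk]
  · intro e
    have := congrFun e k
    simp [hβ, hαk] at this
end

section
/- (Lemma 9.) Suppose Σ_{i=1}^q i·x(S_i) ≥ q is valid for Π and is not strictly dominated by any valid inequality β^T x ≥ q for Π with β_j ∈ {0,1,…,q} for all j (i.e., no such valid β with β ≤ α componentwise and β ≠ α, where α is the coefficient vector of the given inequality). Then for every type τ = (I, L, m) of this inequality, |L_i| ≤ q² for all i ∈ I. -/
open Finset

/-- Coefficient vector of the inequality Σ_{i=1}^q i·x(S_i) ≥ q: α_j = i for
j ∈ S_i and α_j = 0 otherwise (the S_i being pairwise disjoint). -/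
def coeff (n q : ℕ) (S : ℕ → Finset (Fin n)) : Fin n → ℕ :=
  fun j => ∑ i ∈ Finset.Icc 1 q, if j ∈ S i then i else 0

/-- I = {1 ≤ i ≤ q : S_i ≠ ∅}. -/
def Iset (n q : ℕ) (S : ℕ → Finset (Fin n)) : Finset ℕ :=
  (Finset.Icc 1 q).filter (fun i => (S i).Nonempty)

/-- D_i = (∪_{q ≥ k > i} δ(k)) ∩ S_i. -/
def Dset (n q : ℕ) (w : Fin n → ℕ) (S : ℕ → Finset (Fin n)) (i : ℕ) :
    Finset (Fin n) :=
  ((Finset.Icc (i + 1) q).biUnion (fun k => dragSet n w (coeff n q S) k)) ∩ S i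

/-- (I, L, m) is a type of the inequality Σ_{i=1}^q i·x(S_i) ≥ q (with I = Iset):
(t.1) L_i ⊆ S_i, (a) w_j ≤ w_h for j ∈ S_i ∖ L_i, h ∈ L_i,
(b) |L_i| = max{|D_i|, min{q−1, |S_i|}}; (t.2) m_i ∈ S_i attains min{w_j : j ∈ S_i}. -/
def IsType (n q : ℕ) (w : Fin n → ℕ) (S L : ℕ → Finset (Fin n))
    (m : ℕ → Fin n) : Prop :=
  ∀ i ∈ Iset n q S,
    L i ⊆ S i ∧
    (∀ j ∈ S i \ L i, ∀ h ∈ L i, w j ≤ w h) ∧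
    (L i).card = max (Dset n q w S i).card (min (q - 1) (S i).card) ∧
    m i ∈ S i ∧ (∀ j ∈ S i, w (m i) ≤ w j)


open Finset

lemma knapValid_iff (n : ℕ) (w : Fin n → ℕ) (w0 : ℕ) (α : Fin n → ℕ) (α0 : ℕ) :
    knapValid n w w0 α α0 ↔
    ∀ F : Finset (Fin n), w0 ≤ ∑ j ∈ F, w j → α0 ≤ ∑ j ∈ F, α j := by
  classical
  constructor
  · intro h F hF
    have hx : ∀ j : Fin n, (if j ∈ F then (1:ℝ) else 0) = 0 ∨ (if j ∈ F then (1:ℝ) else 0) = 1 := by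
      intro j; by_cases hj : j ∈ F <;> simp [hj]
    have hsum : ∀ c : Fin n → ℕ,
        ∑ j, (c j : ℝ) * (if j ∈ F then (1:ℝ) else 0) = ((∑ j ∈ F, c j : ℕ) : ℝ) := by
      intro c
      rw [Finset.sum_congr rfl (fun j _ => by rw [mul_ite, mul_one, mul_zero]),
        Finset.sum_ite_mem, Finset.univ_inter]
      push_cast; ring
    have := h (fun j => if j ∈ F then (1:ℝ) else 0) hx (by rw [hsum]; exact_mod_cast hF)
    rw [hsum] at this
    exact_mod_cast this
  · intro h x hx hwx
    set F := Finset.univ.filter (fun j => x j = 1) with hFdef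
    have hxF : ∀ j, x j = if j ∈ F then (1:ℝ) else 0 := by
      intro j
      rcases hx j with h0 | h0 <;> simp [hFdef, h0]
    have hsum : ∀ c : Fin n → ℕ,
        ∑ j, (c j : ℝ) * x j = ((∑ j ∈ F, c j : ℕ) : ℝ) := by
      intro c
      rw [Finset.sum_congr rfl (fun j _ => by rw [hxF j, mul_ite, mul_one, mul_zero]),
        Finset.sum_ite_mem, Finset.univ_inter]
      push_cast; ring
    rw [hsum] at hwx ⊢
    exact_mod_cast h F (by exact_mod_cast hwx)
lemma coeff_eq (n q : ℕ) (S : ℕ → Finset (Fin n))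
    (hdisj : ∀ i ∈ Finset.Icc 1 q, ∀ k ∈ Finset.Icc 1 q, i ≠ k → Disjoint (S i) (S k))
    {i : ℕ} (hi : i ∈ Finset.Icc 1 q) {j : Fin n} (hj : j ∈ S i) :
    coeff n q S j = i := by
  unfold coeff
  rw [Finset.sum_eq_single i]
  · simp [hj]
  · intro k hk hki
    have hd := hdisj k hk i hi hki
    simp [Finset.disjoint_right.mp hd hj]
  · intro h; exact absurd hi h

lemma coeff_le (n q : ℕ) (S : ℕ → Finset (Fin n))
    (hdisj : ∀ i ∈ Finset.Icc 1 q, ∀ k ∈ Finset.Icc 1 q, i ≠ k → Disjoint (S i) (S k))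
    (j : Fin n) : coeff n q S j ≤ q := by
  by_cases h : ∃ i ∈ Finset.Icc 1 q, j ∈ S i
  · obtain ⟨i, hi, hj⟩ := h
    rw [coeff_eq n q S hdisj hi hj]
    exact (Finset.mem_Icc.mp hi).2
  · push_neg at h
    unfold coeff
    rw [Finset.sum_eq_zero (fun i hi => by simp [h i hi])]
    exact Nat.zero_le q

lemma dragCard (n : ℕ) (w : Fin n → ℕ) (w0 : ℕ) (q : ℕ)
    (S : ℕ → Finset (Fin n))
    (hdisj : ∀ i ∈ Finset.Icc 1 q, ∀ k ∈ Finset.Icc 1 q, i ≠ k → Disjoint (S i) (S k))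
    (hvalid : knapValid n w w0 (coeff n q S) q)
    (hundom : ¬ ∃ β : Fin n → ℕ, (∀ j, β j ≤ q) ∧ knapValid n w w0 β q ∧
        (∀ j, β j ≤ coeff n q S j) ∧ β ≠ coeff n q S) :
    ∀ k ∈ Finset.Icc 1 q, (dragSet n w (coeff n q S) k).card + k ≤ q := by
  classical
  intro k hk
  obtain ⟨hk1, hkq⟩ := Finset.mem_Icc.mp hk
  by_contra hcon
  push_neg at hcon
  set α := coeff n q S with hα
  set D := dragSet n w α k with hD
  have hDcard : q + 1 ≤ D.card + k := hcon
  have hDne : D.Nonempty := by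
    rw [← Finset.card_pos]; omega
  obtain ⟨h0, hh0⟩ := hDne
  obtain ⟨⟨j0, hj0k, _⟩, _, _⟩ := (Finset.mem_filter.mp hh0).2
  have hT : (Finset.univ.filter (fun j => α j = k)).Nonempty := ⟨j0, by simp [hj0k]⟩
  obtain ⟨js, hjs, hjsmin⟩ := Finset.exists_min_image _ w hT
  have hjsk : α js = k := (Finset.mem_filter.mp hjs).2
  have hjsD : js ∉ D := by
    intro hmem
    have := (Finset.mem_filter.mp hmem).2.2.2
    omega
  have hwjs : ∀ h ∈ D, w js ≤ w h := by
    intro h hmem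
    obtain ⟨⟨j, hjk, hwj⟩, _, _⟩ := (Finset.mem_filter.mp hmem).2
    exact le_trans (hjsmin j (by simp [hjk])) hwj
  have hαD : ∀ h ∈ D, 1 ≤ α h ∧ α h < k := fun h hmem =>
    ⟨(Finset.mem_filter.mp hmem).2.2.1, (Finset.mem_filter.mp hmem).2.2.2⟩
  set β := Function.update α js (k - 1) with hβ
  have hβjs : β js = k - 1 := Function.update_self js (k-1) α
  have hβne : ∀ j : Fin n, j ≠ js → β j = α j := fun j hj => Function.update_of_ne hj _ _
  have hvalidF := (knapValid_iff n w w0 α q).mp hvalid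
  apply hundom
  refine ⟨β, ?_, ?_, ?_, ?_⟩
  · intro j
    by_cases hj : j = js
    · subst hj; rw [hβjs]; omega
    · rw [hβne j hj]; exact coeff_le n q S hdisj j
  · rw [knapValid_iff]
    intro F hF
    by_cases hjF : js ∈ F
    · have e2 : ∑ j ∈ F, α j = k + ∑ j ∈ F.erase js, α j := by
        rw [← Finset.add_sum_erase F α hjF, hjsk]
      have e3 : ∑ j ∈ F, β j = (k - 1) + ∑ j ∈ F.erase js, α j := by
        rw [← Finset.add_sum_erase F β hjF, hβjs,
          Finset.sum_congr rfl (fun j hj => hβne j (Finset.ne_of_mem_erase hj))]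
      suffices hs : q + 1 ≤ ∑ j ∈ F, α j by omega
      by_cases hall : ∀ h ∈ D, h ∈ F
      · have hsub : insert js D ⊆ F := by
          intro x hx
          rcases Finset.mem_insert.mp hx with rfl | hx
          exacts [hjF, hall x hx]
        have hle : ∑ j ∈ insert js D, α j ≤ ∑ j ∈ F, α j :=
          Finset.sum_le_sum_of_subset hsub
        have h3 : ∑ j ∈ insert js D, α j = k + ∑ j ∈ D, α j := by
          rw [Finset.sum_insert hjsD, hjsk]
        have h2 : D.card ≤ ∑ j ∈ D, α j := by
          rw [Finset.card_eq_sum_ones]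
          exact Finset.sum_le_sum (fun h hh => (hαD h hh).1)
        omega
      · push_neg at hall
        obtain ⟨h, hhD, hhF⟩ := hall
        have hhF' : h ∉ F.erase js := fun hc => hhF (Finset.mem_of_mem_erase hc)
        have hwF' : w0 ≤ ∑ j ∈ insert h (F.erase js), w j := by
          have e1 : ∑ j ∈ insert h (F.erase js), w j = w h + ∑ j ∈ F.erase js, w j :=
            Finset.sum_insert hhF'
          have e2' : ∑ j ∈ F, w j = w js + ∑ j ∈ F.erase js, w j :=
            (Finset.add_sum_erase F w hjF).symm
          have := hwjs h hhD
          omega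
        have hvF' := hvalidF _ hwF'
        rw [Finset.sum_insert hhF'] at hvF'
        have hαh := hαD h hhD
        omega
    · rw [Finset.sum_congr rfl (fun j hj => hβne j (by rintro rfl; exact hjF hj))]
      exact hvalidF F hF
  · intro j
    by_cases hj : j = js
    · subst hj; rw [hβjs, hjsk]; omega
    · rw [hβne j hj]
  · intro he
    have := congrFun he js
    rw [hβjs, hjsk] at this
    omega
/-- Lemma 9: if Σ_{i=1}^q i·x(S_i) ≥ q is valid for Π and not
strictly dominated by any valid inequality β^T x ≥ q with β ∈ {0,…,q}^n, then for
every type τ = (I, L, m) of this inequality, |L_i| ≤ q² for all i ∈ I. -/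
theorem stmt_13 (n : ℕ) (hn : 0 < n) (w : Fin n → ℕ) (w0 : ℕ)
    (hw : ∀ j, w j ≤ w0) (q : ℕ) (hq : 2 ≤ q)
    (S : ℕ → Finset (Fin n))
    (hdisj : ∀ i ∈ Finset.Icc 1 q, ∀ k ∈ Finset.Icc 1 q, i ≠ k →
        Disjoint (S i) (S k))
    (hvalid : knapValid n w w0 (coeff n q S) q)
    (hundom : ¬ ∃ β : Fin n → ℕ, (∀ j, β j ≤ q) ∧ knapValid n w w0 β q ∧
        (∀ j, β j ≤ coeff n q S j) ∧ β ≠ coeff n q S)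
    (L : ℕ → Finset (Fin n)) (m : ℕ → Fin n)
    (htype : IsType n q w S L m) :
    ∀ i ∈ Iset n q S, (L i).card ≤ q ^ 2 := by
  intro i hi
  obtain ⟨-, -, hLcard, -, -⟩ := htype i hi
  have hi1 : 1 ≤ i := (Finset.mem_Icc.mp (Finset.mem_filter.mp hi).1).1
  have hdrag := dragCard n w w0 q S hdisj hvalid hundom
  have hDle : (Dset n q w S i).card ≤ (q - 1) * q := by
    calc (Dset n q w S i).card
        ≤ ((Finset.Icc (i + 1) q).biUnion
            (fun k => dragSet n w (coeff n q S) k)).card :=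
          Finset.card_le_card Finset.inter_subset_left
      _ ≤ ∑ k ∈ Finset.Icc (i + 1) q, (dragSet n w (coeff n q S) k).card :=
          Finset.card_biUnion_le
      _ ≤ ∑ _k ∈ Finset.Icc (i + 1) q, q := by
          refine Finset.sum_le_sum (fun k hk => ?_)
          have hk' : k ∈ Finset.Icc 1 q := by
            rw [Finset.mem_Icc] at hk ⊢; omega
          have := hdrag k hk'
          omega
      _ = (q - i) * q := by rw [Finset.sum_const, Nat.card_Icc, smul_eq_mul]; congr 1; omega
      _ ≤ (q - 1) * q := Nat.mul_le_mul_right q (by omega)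
  rw [hLcard, pow_two]
  apply max_le
  · exact le_trans hDle (Nat.mul_le_mul_right q (by omega))
  · calc min (q - 1) (S i).card ≤ q - 1 := min_le_left _ _
      _ ≤ q * q := le_trans (by omega) (Nat.le_mul_of_pos_left q (by omega))
end

section
/- (Lemma 10.) Let τ = (I, L, m) be a type of the inequality Σ_{i=1}^q i·x(S_i) ≥ q, and for each i ∈ I let X_i satisfy L_i ⊆ X_i ⊆ S_i. Then σ(τ) = max{Σ_{i∈I} w(T_i) : T_i ⊆ X_i for all i ∈ I and Σ_{i∈I} i·|T_i| < q}. In particular, all types of a given inequality have the same signature. -/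
set_option maxHeartbeats 1000000


open Finset

/-- The signature σ(τ) = max{Σ_{i∈I} w(T_i) : T_i ⊆ L_i for all i ∈ I and
Σ_{i∈I} i·|T_i| < q}.  Since the sets L_i (i ∈ I) are pairwise disjoint, a family
(T_i)_{i∈I} with T_i ⊆ L_i is encoded by the single set T = ∪_i T_i ⊆ ∪_i L_i,
with T_i = T ∩ L_i. -/
def signature (n q : ℕ) (w : Fin n → ℕ) (I : Finset ℕ)
    (L : ℕ → Finset (Fin n)) : ℕ :=
  ((I.biUnion L).powerset.filter
      (fun T => ∑ i ∈ I, i * (T ∩ L i).card < q)).sup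
    (fun T => ∑ j ∈ T, w j)

section Aux

variable {n q : ℕ} {w : Fin n → ℕ} {S : ℕ → Finset (Fin n)}

lemma eq_of_mem_both
    (hdisj : ∀ i ∈ Finset.Icc 1 q, ∀ k ∈ Finset.Icc 1 q, i ≠ k →
        Disjoint (S i) (S k))
    {i k : ℕ} (hi : i ∈ Finset.Icc 1 q) (hk : k ∈ Finset.Icc 1 q)
    {j : Fin n} (hji : j ∈ S i) (hjk : j ∈ S k) : i = k := by
  by_contra h
  exact absurd hjk (Finset.disjoint_left.mp (hdisj i hi k hk h) hji)

lemma aux_sum_le_sum {s t : Finset (Fin n)}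
    (h : s.card ≤ t.card) (hw : ∀ a ∈ s, ∀ b ∈ t, w a ≤ w b) :
    ∑ a ∈ s, w a ≤ ∑ b ∈ t, w b := by
  rcases s.eq_empty_or_nonempty with hs | hs
  · simp [hs]
  · have ht : t.Nonempty := Finset.card_pos.mp (lt_of_lt_of_le (Finset.card_pos.mpr hs) h)
    obtain ⟨b0, hb0, hb0min⟩ := t.exists_min_image w ht
    calc ∑ a ∈ s, w a ≤ s.card * w b0 := by
          simpa using Finset.sum_le_card_nsmul s w (w b0) (fun a ha => hw a ha b0 hb0)
      _ ≤ t.card * w b0 := Nat.mul_le_mul_right _ h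
      _ ≤ ∑ b ∈ t, w b := by
          simpa using Finset.card_nsmul_le_sum t w (w b0) (fun b hb => hb0min b hb)

/-- Easy direction: enlarging the sets can only increase the signature. -/
lemma sig_mono
    (hdisj : ∀ i ∈ Finset.Icc 1 q, ∀ k ∈ Finset.Icc 1 q, i ≠ k →
        Disjoint (S i) (S k))
    {L X : ℕ → Finset (Fin n)}
    (hLS : ∀ i ∈ Iset n q S, L i ⊆ S i)
    (hX : ∀ i ∈ Iset n q S, L i ⊆ X i ∧ X i ⊆ S i) :
    signature n q w (Iset n q S) L ≤ signature n q w (Iset n q S) X := by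
  unfold signature
  set I := Iset n q S with hI
  have hIq : I ⊆ Finset.Icc 1 q := Finset.filter_subset _ _
  apply Finset.sup_le
  intro T hT
  simp only [Finset.mem_filter, Finset.mem_powerset] at hT
  obtain ⟨hTsub, hTfeas⟩ := hT
  have hinter : ∀ i ∈ I, T ∩ X i = T ∩ L i := by
    intro i hi
    ext j
    simp only [Finset.mem_inter]
    constructor
    · rintro ⟨hjT, hjX⟩
      obtain ⟨i', hi', hji'⟩ := Finset.mem_biUnion.mp (hTsub hjT)
      have : i' = i := eq_of_mem_both hdisj (hIq hi') (hIq hi)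
        (hLS i' hi' hji') ((hX i hi).2 hjX)
      exact ⟨hjT, this ▸ hji'⟩
    · rintro ⟨hjT, hjL⟩
      exact ⟨hjT, (hX i hi).1 hjL⟩
  refine Finset.le_sup (f := fun T => ∑ j ∈ T, w j) ?_
  simp only [Finset.mem_filter, Finset.mem_powerset]
  refine ⟨hTsub.trans (Finset.biUnion_mono
    (fun i hi => (hX i hi).1)), ?_⟩
  calc ∑ i ∈ I, i * (T ∩ X i).card
      = ∑ i ∈ I, i * (T ∩ L i).card :=
        Finset.sum_congr rfl (fun i hi => by rw [hinter i hi])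
    _ < q := hTfeas

/-- Hard direction. -/
lemma sig_ge (hq : 2 ≤ q)
    (hdisj : ∀ i ∈ Finset.Icc 1 q, ∀ k ∈ Finset.Icc 1 q, i ≠ k →
        Disjoint (S i) (S k))
    {L X : ℕ → Finset (Fin n)}
    (hLS : ∀ i ∈ Iset n q S, L i ⊆ S i)
    (ha : ∀ i ∈ Iset n q S, ∀ j ∈ S i \ L i, ∀ h ∈ L i, w j ≤ w h)
    (hc : ∀ i ∈ Iset n q S, min (q - 1) (S i).card ≤ (L i).card)
    (hX : ∀ i ∈ Iset n q S, L i ⊆ X i ∧ X i ⊆ S i) :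
    signature n q w (Iset n q S) X ≤ signature n q w (Iset n q S) L := by
  unfold signature
  set I := Iset n q S with hI
  have hIq : I ⊆ Finset.Icc 1 q := Finset.filter_subset _ _
  apply Finset.sup_le
  intro T hT
  simp only [Finset.mem_filter, Finset.mem_powerset] at hT
  obtain ⟨hTsub, hTfeas⟩ := hT
  -- |T ∩ X i| ≤ |L i| for i ∈ I
  have hcardLe : ∀ i ∈ I, (T ∩ X i).card ≤ (L i).card := by
    intro i hi
    have h1i : 1 ≤ i := (Finset.mem_Icc.mp (hIq hi)).1
    have hterm : i * (T ∩ X i).card ≤ ∑ k ∈ I, k * (T ∩ X k).card :=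
      Finset.single_le_sum (f := fun k => k * (T ∩ X k).card)
        (fun _ _ => Nat.zero_le _) hi
    have hlt : (T ∩ X i).card < q := by
      calc (T ∩ X i).card ≤ i * (T ∩ X i).card := Nat.le_mul_of_pos_left _ h1i
        _ ≤ _ := hterm
        _ < q := hTfeas
    have h2 : (T ∩ X i).card ≤ q - 1 := Nat.le_sub_one_of_lt hlt
    have h3 : (T ∩ X i).card ≤ (S i).card :=
      Finset.card_le_card ((Finset.inter_subset_right).trans (hX i hi).2)
    exact le_trans (le_min h2 h3) (hc i hi)
  have hTLsub : ∀ i ∈ I, T ∩ L i ⊆ T ∩ X i := fun i hi =>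
    Finset.inter_subset_inter le_rfl (hX i hi).1
  -- choose replacement sets R i ⊆ L i \ T
  have hex : ∀ i : ℕ, ∃ R : Finset (Fin n), i ∈ I →
      R ⊆ L i \ T ∧ R.card = (T ∩ X i).card - (T ∩ L i).card := by
    intro i
    by_cases hi : i ∈ I
    · have hsd : L i \ T = L i \ (L i ∩ T) := by
        ext j; simp only [Finset.mem_sdiff, Finset.mem_inter]; tauto
      have hcardsd : (L i \ T).card = (L i).card - (T ∩ L i).card := by
        rw [hsd, Finset.card_sdiff_of_subset (Finset.inter_subset_left), Finset.inter_comm]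
      have hle : (T ∩ X i).card - (T ∩ L i).card ≤ (L i \ T).card := by
        rw [hcardsd]
        exact Nat.sub_le_sub_right (hcardLe i hi) _
      obtain ⟨R, hR1, hR2⟩ := Finset.exists_subset_card_eq hle
      exact ⟨R, fun _ => ⟨hR1, hR2⟩⟩
    · exact ⟨∅, fun h => absurd h hi⟩
  choose R hR using hex
  set Tf : ℕ → Finset (Fin n) := fun i => (T ∩ L i) ∪ R i with hTf
  -- basic facts about Tf
  have hTfL : ∀ i ∈ I, Tf i ⊆ L i := by
    intro i hi
    exact Finset.union_subset Finset.inter_subset_right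
      (((hR i hi).1).trans Finset.sdiff_subset)
  have hdisjTR : ∀ i ∈ I, Disjoint (T ∩ L i) (R i) := by
    intro i hi
    rw [Finset.disjoint_left]
    intro a haTL haR
    exact (Finset.mem_sdiff.mp ((hR i hi).1 haR)).2 (Finset.mem_inter.mp haTL).1
  have hTfcard : ∀ i ∈ I, (Tf i).card = (T ∩ X i).card := by
    intro i hi
    rw [Finset.card_union_of_disjoint (hdisjTR i hi), (hR i hi).2,
      Nat.add_sub_cancel' (Finset.card_le_card (hTLsub i hi))]
  set T' : Finset (Fin n) := I.biUnion Tf with hT'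
  have hT'L : T' ⊆ I.biUnion L :=
    Finset.biUnion_mono hTfL
  have hinterT' : ∀ i ∈ I, T' ∩ L i = Tf i := by
    intro i hi
    ext j
    simp only [Finset.mem_inter]
    constructor
    · rintro ⟨hjT', hjL⟩
      obtain ⟨i', hi', hji'⟩ := Finset.mem_biUnion.mp hjT'
      have : i' = i := eq_of_mem_both hdisj (hIq hi') (hIq hi)
        (hLS i' hi' (hTfL i' hi' hji')) (hLS i hi hjL)
      exact this ▸ hji'
    · intro hj
      exact ⟨Finset.mem_biUnion.mpr ⟨i, hi, hj⟩, hTfL i hi hj⟩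
  -- T decomposes along the X i
  have hTdecomp : T = I.biUnion (fun i => T ∩ X i) := by
    ext j
    simp only [Finset.mem_biUnion, Finset.mem_inter]
    constructor
    · intro hj
      obtain ⟨i, hi, hji⟩ := Finset.mem_biUnion.mp (hTsub hj)
      exact ⟨i, hi, hj, hji⟩
    · rintro ⟨i, hi, hj, _⟩
      exact hj
  have hpwX : (I : Set ℕ).PairwiseDisjoint (fun i => T ∩ X i) := by
    intro i hi k hk hik
    apply Finset.disjoint_left.mpr
    intro a hai hak
    exact hik (eq_of_mem_both hdisj (hIq hi) (hIq hk)
      ((hX i hi).2 (Finset.mem_inter.mp hai).2) ((hX k hk).2 (Finset.mem_inter.mp hak).2))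
  have hpwTf : (I : Set ℕ).PairwiseDisjoint Tf := by
    intro i hi k hk hik
    apply Finset.disjoint_left.mpr
    intro a hai hak
    exact hik (eq_of_mem_both hdisj (hIq hi) (hIq hk)
      (hLS i hi (hTfL i hi hai)) (hLS k hk (hTfL k hk hak)))
  -- weight comparison per block
  have hwt : ∀ i ∈ I, ∑ j ∈ T ∩ X i, w j ≤ ∑ j ∈ Tf i, w j := by
    intro i hi
    have hsub : T ∩ L i ⊆ T ∩ X i := hTLsub i hi
    have hsd : (T ∩ X i) \ (T ∩ L i) = (T ∩ X i) \ L i := by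
      ext j
      simp only [Finset.mem_sdiff, Finset.mem_inter]
      tauto
    have hsplit : ∑ j ∈ (T ∩ X i) \ (T ∩ L i), w j + ∑ j ∈ T ∩ L i, w j
        = ∑ j ∈ T ∩ X i, w j := Finset.sum_sdiff hsub
    have hcardB : ((T ∩ X i) \ (T ∩ L i)).card = (R i).card := by
      rw [Finset.card_sdiff_of_subset hsub, (hR i hi).2]
    have hB : ∑ j ∈ (T ∩ X i) \ (T ∩ L i), w j ≤ ∑ j ∈ R i, w j := by
      apply aux_sum_le_sum hcardB.le
      intro a haB b hbR
      have haX : a ∈ X i := (Finset.mem_inter.mp (Finset.mem_sdiff.mp haB).1).2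
      have haS : a ∈ S i := (hX i hi).2 haX
      have haL : a ∉ L i := by
        rw [hsd] at haB
        exact (Finset.mem_sdiff.mp haB).2
      have hbL : b ∈ L i := (Finset.mem_sdiff.mp ((hR i hi).1 hbR)).1
      exact ha i hi a (Finset.mem_sdiff.mpr ⟨haS, haL⟩) b hbL
    calc ∑ j ∈ T ∩ X i, w j
        = ∑ j ∈ (T ∩ X i) \ (T ∩ L i), w j + ∑ j ∈ T ∩ L i, w j := hsplit.symm
      _ ≤ ∑ j ∈ R i, w j + ∑ j ∈ T ∩ L i, w j := by
          exact Nat.add_le_add_right hB _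
      _ = ∑ j ∈ Tf i, w j := by
          rw [hTf]
          rw [Finset.sum_union (hdisjTR i hi)]
          ring
  -- T' is feasible
  have hT'feas : ∑ i ∈ I, i * (T' ∩ L i).card < q := by
    calc ∑ i ∈ I, i * (T' ∩ L i).card
        = ∑ i ∈ I, i * (T ∩ X i).card :=
          Finset.sum_congr rfl (fun i hi => by rw [hinterT' i hi, hTfcard i hi])
      _ < q := hTfeas
  have hT'mem : T' ∈ ((I.biUnion L).powerset.filter
      (fun T => ∑ i ∈ I, i * (T ∩ L i).card < q)) := by
    simp only [Finset.mem_filter, Finset.mem_powerset]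
    exact ⟨hT'L, hT'feas⟩
  calc ∑ j ∈ T, w j
      = ∑ i ∈ I, ∑ j ∈ T ∩ X i, w j := by
        conv_lhs => rw [hTdecomp]
        exact Finset.sum_biUnion hpwX
    _ ≤ ∑ i ∈ I, ∑ j ∈ Tf i, w j :=
        Finset.sum_le_sum hwt
    _ = ∑ j ∈ T', w j := (Finset.sum_biUnion hpwTf).symm
    _ ≤ _ := Finset.le_sup (f := fun T => ∑ j ∈ T, w j) hT'mem

lemma sig_eq (hq : 2 ≤ q)
    (hdisj : ∀ i ∈ Finset.Icc 1 q, ∀ k ∈ Finset.Icc 1 q, i ≠ k →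
        Disjoint (S i) (S k))
    {L X : ℕ → Finset (Fin n)} {m : ℕ → Fin n}
    (htype : IsType n q w S L m)
    (hX : ∀ i ∈ Iset n q S, L i ⊆ X i ∧ X i ⊆ S i) :
    signature n q w (Iset n q S) L = signature n q w (Iset n q S) X := by
  have hLS : ∀ i ∈ Iset n q S, L i ⊆ S i := fun i hi => (htype i hi).1
  have ha : ∀ i ∈ Iset n q S, ∀ j ∈ S i \ L i, ∀ h ∈ L i, w j ≤ w h :=
    fun i hi => (htype i hi).2.1
  have hc : ∀ i ∈ Iset n q S, min (q - 1) (S i).card ≤ (L i).card := by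
    intro i hi
    rw [(htype i hi).2.2.1]
    exact le_max_right _ _
  exact le_antisymm (sig_mono hdisj hLS hX) (sig_ge hq hdisj hLS ha hc hX)

end Aux

/-- Lemma 10: if τ = (I, L, m) is a type of Σ_{i=1}^q i·x(S_i) ≥ q
and L_i ⊆ X_i ⊆ S_i for each i ∈ I, then σ(τ) equals the same maximum computed with
the subsets T_i ranging over subsets of X_i; in particular all types of the given
inequality have the same signature. -/
theorem stmt_14 (n : ℕ) (hn : 0 < n) (w : Fin n → ℕ) (w0 : ℕ)
    (hw : ∀ j, w j ≤ w0) (q : ℕ) (hq : 2 ≤ q)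
    (S : ℕ → Finset (Fin n))
    (hdisj : ∀ i ∈ Finset.Icc 1 q, ∀ k ∈ Finset.Icc 1 q, i ≠ k →
        Disjoint (S i) (S k))
    (L : ℕ → Finset (Fin n)) (m : ℕ → Fin n)
    (htype : IsType n q w S L m)
    (X : ℕ → Finset (Fin n))
    (hX : ∀ i ∈ Iset n q S, L i ⊆ X i ∧ X i ⊆ S i) :
    signature n q w (Iset n q S) L = signature n q w (Iset n q S) X ∧
    (∀ (L' : ℕ → Finset (Fin n)) (m' : ℕ → Fin n), IsType n q w S L' m' →
      signature n q w (Iset n q S) L = signature n q w (Iset n q S) L') := by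
  constructor
  · exact sig_eq hq hdisj htype hX
  · intro L' m' htype'
    have hXS : ∀ i ∈ Iset n q S, L i ⊆ S i ∧ S i ⊆ S i :=
      fun i hi => ⟨(htype i hi).1, le_rfl⟩
    have hXS' : ∀ i ∈ Iset n q S, L' i ⊆ S i ∧ S i ⊆ S i :=
      fun i hi => ⟨(htype' i hi).1, le_rfl⟩
    rw [sig_eq hq hdisj htype hXS, sig_eq hq hdisj htype' hXS']
end

section
/- (Validity criterion via excluded covers.) Let q ≥ 2 and let S_1,…,S_q ⊆ {1,…,n} be pairwise disjoint. The inequality Σ_{i=1}^q i·x(S_i) ≥ q is valid for Π if and only if for every family of subsets T_i ⊆ S_i (1 ≤ i ≤ q) with Σ_{i=1}^q i·|T_i| < q, one has Σ_{i=1}^q w(S_i ∖ T_i) ≥ Σ_{j=1}^n w_j − w_0 + 1. -/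
open Finset

lemma binary_sum {n : ℕ} (x : Fin n → ℝ) (hx : ∀ j, x j = 0 ∨ x j = 1)
    (c : Fin n → ℕ) [DecidablePred fun j => x j = 1] :
    ∑ j, (c j : ℝ) * x j = ∑ j ∈ univ.filter (fun j => x j = 1), (c j : ℝ) := by
  rw [Finset.sum_filter]
  refine Finset.sum_congr rfl fun j _ => ?_
  rcases hx j with h | h <;> simp [h]

lemma coeff_sum {n : ℕ} (q : ℕ) (S : ℕ → Finset (Fin n)) (F : Finset (Fin n)) :
    ∑ j ∈ F, coeff n q S j = ∑ i ∈ Finset.Icc 1 q, i * (S i ∩ F).card := by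
  unfold coeff
  rw [Finset.sum_comm]
  refine Finset.sum_congr rfl fun i _ => ?_
  rw [Finset.sum_ite_mem, Finset.sum_const, smul_eq_mul, Finset.inter_comm, mul_comm]


/-- validity criterion via excluded covers: for q ≥ 2 and pairwise
disjoint S_1,…,S_q, the inequality Σ_{i=1}^q i·x(S_i) ≥ q is valid for Π iff for
every family T_i ⊆ S_i (1 ≤ i ≤ q) with Σ_{i=1}^q i·|T_i| < q one has
Σ_{i=1}^q w(S_i ∖ T_i) ≥ Σ_{j=1}^n w_j − w₀ + 1. -/
theorem stmt_16 (n : ℕ) (hn : 0 < n) (w : Fin n → ℕ) (w0 : ℕ)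
    (hw : ∀ j, w j ≤ w0) (q : ℕ) (hq : 2 ≤ q)
    (S : ℕ → Finset (Fin n))
    (hdisj : ∀ i ∈ Finset.Icc 1 q, ∀ k ∈ Finset.Icc 1 q, i ≠ k →
        Disjoint (S i) (S k)) :
    knapValid n w w0 (coeff n q S) q ↔
      ∀ T : ℕ → Finset (Fin n), (∀ i ∈ Finset.Icc 1 q, T i ⊆ S i) →
        (∑ i ∈ Finset.Icc 1 q, i * (T i).card < q) →
        (∑ j, (w j : ℤ)) - (w0 : ℤ) + 1 ≤
          ∑ i ∈ Finset.Icc 1 q, ∑ j ∈ S i \ T i, (w j : ℤ) := by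
  classical
  constructor
  · -- validity → T-condition
    intro hval T hTS hcard
    by_contra hcon
    push_neg at hcon
    -- hcon : ∑ ... < ∑ w - w0 + 1
    set D : Finset (Fin n) := (Finset.Icc 1 q).biUnion (fun i => S i \ T i) with hD
    have hdisj' : ∀ i ∈ Finset.Icc 1 q, ∀ k ∈ Finset.Icc 1 q, i ≠ k →
        Disjoint (S i \ T i) (S k \ T k) := fun i hi k hk hik =>
      (hdisj i hi k hk hik).mono sdiff_subset sdiff_subset
    have hDsum : ∑ j ∈ D, (w j : ℤ) = ∑ i ∈ Finset.Icc 1 q, ∑ j ∈ S i \ T i, (w j : ℤ) :=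
      Finset.sum_biUnion hdisj'
    -- define x
    set x : Fin n → ℝ := fun j => if j ∈ D then 0 else 1 with hxdef
    have hxb : ∀ j, x j = 0 ∨ x j = 1 := by
      intro j; by_cases h : j ∈ D <;> simp [hxdef, h]
    have hF : univ.filter (fun j => x j = 1) = univ \ D := by
      ext j
      by_cases h : j ∈ D <;> simp [hxdef, h]
    have hfeas : (w0 : ℝ) ≤ ∑ j, (w j : ℝ) * x j := by
      rw [binary_sum x hxb w, hF]
      have h1 : ∑ j ∈ univ \ D, (w j : ℤ) = ∑ j, (w j : ℤ) - ∑ j ∈ D, (w j : ℤ) := by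
        rw [Finset.sum_sdiff_eq_sub (Finset.subset_univ D)]
      have h2 : (w0 : ℤ) ≤ ∑ j ∈ univ \ D, (w j : ℤ) := by
        rw [h1, hDsum]; omega
      have : ((w0 : ℤ) : ℝ) ≤ ((∑ j ∈ univ \ D, (w j : ℤ) : ℤ) : ℝ) := by exact_mod_cast h2
      push_cast at this ⊢
      exact this
    have := hval x hxb hfeas
    rw [binary_sum x hxb _, hF] at this
    have hcast : ∑ j ∈ univ \ D, ((coeff n q S j : ℕ) : ℝ)
        = ((∑ j ∈ univ \ D, coeff n q S j : ℕ) : ℝ) := by push_cast; ring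
    rw [hcast] at this
    have hq' : q ≤ ∑ j ∈ univ \ D, coeff n q S j := by exact_mod_cast this
    rw [coeff_sum] at hq'
    -- show S i ∩ (univ \ D) = T i
    have hTi : ∀ i ∈ Finset.Icc 1 q, S i ∩ (univ \ D) = T i := by
      intro i hi
      ext j
      simp only [Finset.mem_inter, Finset.mem_sdiff, Finset.mem_univ, true_and, hD,
        Finset.mem_biUnion, not_exists]
      constructor
      · rintro ⟨hjS, hjD⟩
        have := hjD i
        by_contra hjT
        exact this ⟨hi, hjS, hjT⟩
      · intro hjT
        refine ⟨hTS i hi hjT, fun k hk => ?_⟩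
        rcases hk with ⟨hk, hjk⟩
        rcases hjk with ⟨hjSk, hjTk⟩
        by_cases hik : i = k
        · exact hjTk (hik ▸ hjT)
        · exact absurd hjSk (Finset.disjoint_left.mp (hdisj i hi k hk hik) (hTS i hi hjT))
    rw [Finset.sum_congr rfl (fun i hi => by rw [hTi i hi])] at hq'
    omega
  · -- T-condition → validity
    intro hT x hxb hfeas
    by_contra hcon
    push_neg at hcon
    set F : Finset (Fin n) := univ.filter (fun j => x j = 1) with hF
    set T : ℕ → Finset (Fin n) := fun i => S i ∩ F with hTdef
    have hTS : ∀ i ∈ Finset.Icc 1 q, T i ⊆ S i := fun i _ => Finset.inter_subset_left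
    have hαx : ∑ j, (coeff n q S j : ℝ) * x j = ((∑ i ∈ Finset.Icc 1 q, i * (T i).card : ℕ) : ℝ) := by
      rw [binary_sum x hxb _, ← coeff_sum]
      push_cast; ring
    have hcard : ∑ i ∈ Finset.Icc 1 q, i * (T i).card < q := by
      rw [hαx] at hcon; exact_mod_cast hcon
    have hkey := hT T hTS hcard
    -- derive contradiction with feasibility
    have hdisj' : ∀ i ∈ Finset.Icc 1 q, ∀ k ∈ Finset.Icc 1 q, i ≠ k →
        Disjoint (S i \ T i) (S k \ T k) := fun i hi k hk hik =>
      (hdisj i hi k hk hik).mono sdiff_subset sdiff_subset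
    set D : Finset (Fin n) := (Finset.Icc 1 q).biUnion (fun i => S i \ T i) with hD
    have hDsum : ∑ j ∈ D, (w j : ℤ) = ∑ i ∈ Finset.Icc 1 q, ∑ j ∈ S i \ T i, (w j : ℤ) :=
      Finset.sum_biUnion hdisj'
    have hDF : Disjoint D F := by
      rw [Finset.disjoint_left]
      intro j hjD hjF
      rcases Finset.mem_biUnion.mp hjD with ⟨i, hi, hji⟩
      rcases Finset.mem_sdiff.mp hji with ⟨hjS, hjT⟩
      exact hjT (Finset.mem_inter.mpr ⟨hjS, hjF⟩)
    have hsub : ∑ j ∈ D, (w j : ℤ) + ∑ j ∈ F, (w j : ℤ) ≤ ∑ j, (w j : ℤ) := by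
      rw [← Finset.sum_union hDF]
      apply Finset.sum_le_sum_of_subset_of_nonneg (Finset.subset_univ _)
      intro j _ _; positivity
    have hwF : (w0 : ℤ) ≤ ∑ j ∈ F, (w j : ℤ) := by
      rw [binary_sum x hxb w] at hfeas
      have h2 : (w0 : ℝ) ≤ ((∑ j ∈ F, w j : ℕ) : ℝ) := by push_cast; exact hfeas
      have h3 : (w0 : ℕ) ≤ ∑ j ∈ F, w j := by exact_mod_cast h2
      exact_mod_cast h3
    omega
end

section
/- (Lemma 12.) Let τ = (I, L, m) be a type of the inequality Σ_{i∈I} i·x(S_i) ≥ q, and suppose this inequality is valid for Π. Define ẑ ∈ {0,1}^n by ẑ_j = 1 if and only if j ∈ ∪_{i∈I} S_i. Then ẑ is feasible for problem (pqtype): ẑ_j = 1 for all j ∈ ∪_{i∈I}({m_i} ∪ L_i), ẑ_j = 0 for all j ∉ ∪_{i∈I} V_i, and Σ_{j=1}^n w_j ẑ_j ≥ σ(τ) + Σ_{j=1}^n w_j − w_0 + 1. -/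
open Finset

/-- F_i = ∪_{k∈I, k≠i} ({m_k} ∪ L_k). -/
def Fset (n : ℕ) (I : Finset ℕ) (L : ℕ → Finset (Fin n)) (m : ℕ → Fin n)
    (i : ℕ) : Finset (Fin n) :=
  (I.erase i).biUnion (fun k => insert (m k) (L k))

/-- R_i = {j ∉ F_i : w_{m_i} ≤ w_j ≤ M_i} if |L_i| ≥ q−1, and ∅ otherwise, where
M_i = min{min_{h∈L_i} w_h, min{w_{m_k} − 1 : k ∈ I, k > i}}; the condition
w_j ≤ M_i is unfolded as (∀ h ∈ L_i, w_j ≤ w_h) ∧ (∀ k ∈ I, i < k → w_j < w_{m_k}). -/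
def Rset (n q : ℕ) (w : Fin n → ℕ) (I : Finset ℕ) (L : ℕ → Finset (Fin n))
    (m : ℕ → Fin n) (i : ℕ) : Finset (Fin n) :=
  if q - 1 ≤ (L i).card then
    Finset.univ.filter (fun j =>
      j ∉ Fset n I L m i ∧ w (m i) ≤ w j ∧ (∀ h ∈ L i, w j ≤ w h) ∧
        ∀ k ∈ I, i < k → w j < w (m k))
  else ∅

/-- V_i = R_i ∪ L_i. -/
def Vset (n q : ℕ) (w : Fin n → ℕ) (I : Finset ℕ) (L : ℕ → Finset (Fin n))
    (m : ℕ → Fin n) (i : ℕ) : Finset (Fin n) :=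
  Rset n q w I L m i ∪ L i

/-- z ∈ {0,1}^n is feasible for problem (pqtype): z_j = 1 on ∪_{i∈I}({m_i} ∪ L_i),
z_j = 0 outside ∪_{i∈I} V_i, and Σ w_j z_j ≥ σ(τ) + Σ w_j − w₀ + 1. -/
def PqFeasible (n q : ℕ) (w : Fin n → ℕ) (w0 : ℕ) (I : Finset ℕ)
    (L : ℕ → Finset (Fin n)) (m : ℕ → Fin n) (z : Fin n → ℝ) : Prop :=
  (∀ j, z j = 0 ∨ z j = 1) ∧
  (∀ i ∈ I, z (m i) = 1 ∧ ∀ j ∈ L i, z j = 1) ∧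
  (∀ j : Fin n, (∀ i ∈ I, j ∉ Vset n q w I L m i) → z j = 0) ∧
  ((signature n q w I L : ℝ) + ∑ j, (w j : ℝ) - (w0 : ℝ) + 1 ≤
    ∑ j, (w j : ℝ) * z j)

/-
ẑ is the indicator of U = ∪_{i∈I} S_i, so the support constraints reduce to S_i ⊆ V_i. An element
j ∈ S_i ∖ L_i exists only when |L_i| < |S_i|, forcing |L_i| ≥ q − 1; its weight lies between
w_{m_i} and min_{L_i} w; and w_j ≥ w_{m_k} for some k > i would put j and all of L_i into the drag
D_i, contradicting |D_i| ≤ |L_i|. For the weight constraint, take T attaining σ(τ): the point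
with support Uᶜ ∪ T has coefficient sum Σ i·|T ∩ L_i| < q, so by validity its weight
w(Uᶜ) + σ(τ) is below w_0, i.e. w(U) ≥ σ(τ) + w(N) − w_0 + 1.
-/

section

variable {n q : ℕ} {w : Fin n → ℕ} {w0 : ℕ} {S L : ℕ → Finset (Fin n)} {m : ℕ → Fin n}

lemma mem_Icc_of_mem_Iset {i : ℕ} (hi : i ∈ Iset n q S) :
    i ∈ Icc 1 q :=
  filter_subset _ _ hi

lemma coeff_eq_of_mem
    (hdisj : ∀ i ∈ Icc 1 q, ∀ k ∈ Icc 1 q, i ≠ k → Disjoint (S i) (S k))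
    {i : ℕ} (hi : i ∈ Icc 1 q) {j : Fin n} (hj : j ∈ S i) :
    coeff n q S j = i := by
  unfold coeff
  rw [sum_eq_single_of_mem i hi (fun k hk hki => ?_), if_pos hj]
  exact if_neg fun hjk => disjoint_left.mp (hdisj k hk i hi hki) hjk hj

lemma coeff_eq_zero_of_notMem {j : Fin n}
    (hj : j ∉ (Iset n q S).biUnion S) : coeff n q S j = 0 :=
  sum_eq_zero fun i hi => if_neg fun hji =>
    hj (mem_biUnion.mpr ⟨i, mem_filter.mpr ⟨hi, j, hji⟩, hji⟩)

lemma sum_mul_indicator (f : Fin n → ℝ) (A : Finset (Fin n)) :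
    ∑ j, f j * (if j ∈ A then (1 : ℝ) else 0) = ∑ j ∈ A, f j := by
  simp [mul_ite]

lemma knapValid.sum_lt_of_sum_lt {α : Fin n → ℕ} {α0 : ℕ}
    (hvalid : knapValid n w w0 α α0) {A : Finset (Fin n)} (hA : ∑ j ∈ A, α j < α0) :
    ∑ j ∈ A, w j < w0 := by
  by_contra! hw
  have h01 : ∀ j, (if j ∈ A then (1 : ℝ) else 0) = 0 ∨ (if j ∈ A then (1 : ℝ) else 0) = 1 :=
    fun j => by by_cases h : j ∈ A <;> simp [h]
  have := hvalid _ h01 (by rw [sum_mul_indicator]; exact_mod_cast hw)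
  rw [sum_mul_indicator] at this
  exact absurd (by exact_mod_cast this : α0 ≤ ∑ j ∈ A, α j) (not_le.mpr hA)

lemma sum_coeff_of_subset_biUnion {I : Finset ℕ}
    (hdisj : ∀ i ∈ Icc 1 q, ∀ k ∈ Icc 1 q, i ≠ k → Disjoint (S i) (S k))
    (hI : I ⊆ Icc 1 q) (hLS : ∀ i ∈ I, L i ⊆ S i) {T : Finset (Fin n)}
    (hT : T ⊆ I.biUnion L) :
    ∑ j ∈ T, coeff n q S j = ∑ i ∈ I, i * #(T ∩ L i) := by
  have hT_eq : T = I.biUnion fun i => T ∩ L i := by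
    ext x
    simp only [mem_biUnion, mem_inter]
    exact ⟨fun hx => (mem_biUnion.mp (hT hx)).imp fun i ⟨hi, hxL⟩ => ⟨hi, hx, hxL⟩,
      fun ⟨_, _, hx, _⟩ => hx⟩
  have hpairwise : (I : Set ℕ).PairwiseDisjoint fun i => T ∩ L i :=
    fun i hi k hk hik => ((hdisj i (hI hi) k (hI hk) hik).mono (hLS i hi) (hLS k hk)).mono
      inter_subset_right inter_subset_right
  conv_lhs => rw [hT_eq]
  rw [sum_biUnion hpairwise]
  refine sum_congr rfl fun i hi => ?_
  rw [sum_congr rfl fun j hj => coeff_eq_of_mem hdisj (hI hi) (hLS i hi (mem_inter.mp hj).2),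
    sum_const, smul_eq_mul, mul_comm]

lemma signature_add_sum_compl_lt (hq : 0 < q)
    (hdisj : ∀ i ∈ Icc 1 q, ∀ k ∈ Icc 1 q, i ≠ k → Disjoint (S i) (S k))
    (htype : IsType n q w S L m) (hvalid : knapValid n w w0 (coeff n q S) q) :
    signature n q w (Iset n q S) L + ∑ j ∈ ((Iset n q S).biUnion S)ᶜ, w j < w0 := by
  set U := (Iset n q S).biUnion S
  have hLS : ∀ i ∈ Iset n q S, L i ⊆ S i := fun i hi => (htype i hi).1
  have hne : (((Iset n q S).biUnion L).powerset.filter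
      fun T => ∑ i ∈ Iset n q S, i * #(T ∩ L i) < q).Nonempty :=
    ⟨∅, mem_filter.mpr ⟨empty_mem_powerset _, by simpa using hq⟩⟩
  obtain ⟨T, hT, hT_sup⟩ := exists_mem_eq_sup _ hne fun T => ∑ j ∈ T, w j
  rw [mem_filter, mem_powerset] at hT
  have hTU : Disjoint Uᶜ T := disjoint_left.mpr fun x hxU hxT => mem_compl.mp hxU <| by
    obtain ⟨i, hi, hxL⟩ := mem_biUnion.mp (hT.1 hxT)
    exact mem_biUnion.mpr ⟨i, hi, hLS i hi hxL⟩
  have hcoeff : ∑ j ∈ Uᶜ ∪ T, coeff n q S j < q := by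
    rw [sum_union hTU, sum_eq_zero fun j hj => coeff_eq_zero_of_notMem (mem_compl.mp hj),
      zero_add, sum_coeff_of_subset_biUnion hdisj (fun _ => mem_Icc_of_mem_Iset) hLS hT.1]
    exact hT.2
  have := hvalid.sum_lt_of_sum_lt hcoeff
  rw [sum_union hTU] at this
  rw [signature, hT_sup]
  omega

lemma mem_Dset_of_weight_le
    (hdisj : ∀ i ∈ Icc 1 q, ∀ k ∈ Icc 1 q, i ≠ k → Disjoint (S i) (S k))
    {i k : ℕ} (hi : i ∈ Icc 1 q) (hk : k ∈ Icc 1 q) (hik : i < k)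
    {x y : Fin n} (hx : x ∈ S i) (hy : y ∈ S k) (hyx : w y ≤ w x) :
    x ∈ Dset n q w S i := by
  refine mem_inter.mpr ⟨mem_biUnion.mpr ⟨k, ?_, ?_⟩, hx⟩
  · exact mem_Icc.mpr ⟨hik, (mem_Icc.mp hk).2⟩
  · rw [dragSet, mem_filter, coeff_eq_of_mem hdisj hi hx]
    exact ⟨mem_univ _, ⟨y, coeff_eq_of_mem hdisj hk hy, hyx⟩, (mem_Icc.mp hi).1, hik⟩

lemma weight_lt_of_mem_sdiff
    (hdisj : ∀ i ∈ Icc 1 q, ∀ k ∈ Icc 1 q, i ≠ k → Disjoint (S i) (S k))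
    (htype : IsType n q w S L m) {i k : ℕ} (hi : i ∈ Iset n q S) (hk : k ∈ Iset n q S)
    (hik : i < k) {j : Fin n} (hj : j ∈ S i \ L i) :
    w j < w (m k) := by
  by_contra! hle
  obtain ⟨hLS, hLheavy, hLcard, -, -⟩ := htype i hi
  have hdrag : ∀ x ∈ S i, w (m k) ≤ w x → x ∈ Dset n q w S i := fun x hx =>
    mem_Dset_of_weight_le hdisj (mem_Icc_of_mem_Iset hi) (mem_Icc_of_mem_Iset hk) hik hx
      (htype k hk).2.2.2.1
  have hsub : insert j (L i) ⊆ Dset n q w S i := by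
    intro x hx
    rcases mem_insert.mp hx with rfl | hx
    · exact hdrag x (mem_sdiff.mp hj).1 hle
    · exact hdrag x (hLS hx) (hle.trans (hLheavy j hj x hx))
  have := card_le_card hsub
  rw [card_insert_of_notMem (mem_sdiff.mp hj).2] at this
  have := hLcard ▸ le_max_left (#(Dset n q w S i)) (min (q - 1) #(S i))
  omega

lemma notMem_Fset_of_mem
    (hdisj : ∀ i ∈ Icc 1 q, ∀ k ∈ Icc 1 q, i ≠ k → Disjoint (S i) (S k))
    (htype : IsType n q w S L m) {i : ℕ} (hi : i ∈ Iset n q S) {j : Fin n} (hj : j ∈ S i) :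
    j ∉ Fset n (Iset n q S) L m i := by
  intro hF
  obtain ⟨k, hk, hjk⟩ := mem_biUnion.mp hF
  obtain ⟨hLS, -, -, hmk, -⟩ := htype k (mem_of_mem_erase hk)
  have hjSk : j ∈ S k := by
    rcases mem_insert.mp hjk with rfl | h
    · exact hmk
    · exact hLS h
  exact disjoint_left.mp (hdisj k (mem_Icc_of_mem_Iset (mem_of_mem_erase hk)) i
    (mem_Icc_of_mem_Iset hi) (ne_of_mem_erase hk)) hjSk hj

lemma mem_Rset_of_mem_sdiff
    (hdisj : ∀ i ∈ Icc 1 q, ∀ k ∈ Icc 1 q, i ≠ k → Disjoint (S i) (S k))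
    (htype : IsType n q w S L m) {i : ℕ} (hi : i ∈ Iset n q S) {j : Fin n}
    (hj : j ∈ S i \ L i) :
    j ∈ Rset n q w (Iset n q S) L m i := by
  obtain ⟨hLS, hLheavy, hLcard, -, hmin⟩ := htype i hi
  have hcard : q - 1 ≤ #(L i) := by
    have hlt : #(L i) < #(S i) :=
      card_lt_card ⟨hLS, fun h => (mem_sdiff.mp hj).2 (h (mem_sdiff.mp hj).1)⟩
    have := hLcard ▸ le_max_right (#(Dset n q w S i)) (min (q - 1) #(S i))
    omega
  rw [Rset, if_pos hcard, mem_filter]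
  exact ⟨mem_univ _, notMem_Fset_of_mem hdisj htype hi (mem_sdiff.mp hj).1,
    hmin j (mem_sdiff.mp hj).1, hLheavy j hj,
    fun k hk hik => weight_lt_of_mem_sdiff hdisj htype hi hk hik hj⟩

lemma subset_Vset
    (hdisj : ∀ i ∈ Icc 1 q, ∀ k ∈ Icc 1 q, i ≠ k → Disjoint (S i) (S k))
    (htype : IsType n q w S L m) {i : ℕ} (hi : i ∈ Iset n q S) :
    S i ⊆ Vset n q w (Iset n q S) L m i := by
  intro j hj
  by_cases hjL : j ∈ L i
  · exact mem_union_right _ hjL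
  · exact mem_union_left _ (mem_Rset_of_mem_sdiff hdisj htype hi (mem_sdiff.mpr ⟨hj, hjL⟩))

end

theorem stmt_17_general (n : ℕ) (w : Fin n → ℕ) (w0 : ℕ)
    (q : ℕ) (hq : 2 ≤ q)
    (S : ℕ → Finset (Fin n))
    (hdisj : ∀ i ∈ Finset.Icc 1 q, ∀ k ∈ Finset.Icc 1 q, i ≠ k →
        Disjoint (S i) (S k))
    (L : ℕ → Finset (Fin n)) (m : ℕ → Fin n)
    (htype : IsType n q w S L m)
    (hvalid : knapValid n w w0 (coeff n q S) q)
    (zhat : Fin n → ℝ)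
    (hzhat : zhat = fun j => if j ∈ (Iset n q S).biUnion S then (1 : ℝ) else 0) :
    PqFeasible n q w w0 (Iset n q S) L m zhat := by
  subst hzhat
  set U := (Iset n q S).biUnion S
  have hSU : ∀ i ∈ Iset n q S, ∀ j ∈ S i, j ∈ U := fun i hi j hj => mem_biUnion.mpr ⟨i, hi, hj⟩
  refine ⟨fun j => by by_cases h : j ∈ U <;> simp [h], fun i hi => ?_, fun j hj => ?_, ?_⟩
  · obtain ⟨hLS, -, -, hm, -⟩ := htype i hi
    exact ⟨if_pos (hSU i hi _ hm), fun j hj => if_pos (hSU i hi _ (hLS hj))⟩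
  · refine if_neg fun hjU => ?_
    obtain ⟨i, hi, hjS⟩ := mem_biUnion.mp hjU
    exact hj i hi (subset_Vset hdisj htype hi hjS)
  · have hlt : (signature n q w (Iset n q S) L : ℝ) + ∑ j ∈ Uᶜ, (w j : ℝ) + 1 ≤ w0 := by
      exact_mod_cast signature_add_sum_compl_lt (by omega) hdisj htype hvalid
    have hsplit : ∑ j ∈ Uᶜ, (w j : ℝ) + ∑ j ∈ U, (w j : ℝ) = ∑ j, (w j : ℝ) := by
      exact_mod_cast sum_compl_add_sum U w
    rw [sum_mul_indicator]
    linarith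

/-- Lemma 12: if τ = (I, L, m) is a type of the valid inequality
Σ_{i∈I} i·x(S_i) ≥ q, then ẑ with ẑ_j = 1 iff j ∈ ∪_{i∈I} S_i is feasible for
problem (pqtype). -/
theorem stmt_17 (n : ℕ) (hn : 0 < n) (w : Fin n → ℕ) (w0 : ℕ)
    (hw : ∀ j, w j ≤ w0) (q : ℕ) (hq : 2 ≤ q)
    (S : ℕ → Finset (Fin n))
    (hdisj : ∀ i ∈ Finset.Icc 1 q, ∀ k ∈ Finset.Icc 1 q, i ≠ k →
        Disjoint (S i) (S k))
    (L : ℕ → Finset (Fin n)) (m : ℕ → Fin n)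
    (htype : IsType n q w S L m)
    (hvalid : knapValid n w w0 (coeff n q S) q)
    (zhat : Fin n → ℝ)
    (hzhat : zhat = fun j => if j ∈ (Iset n q S).biUnion S then (1 : ℝ) else 0) :
    PqFeasible n q w w0 (Iset n q S) L m zhat :=
  stmt_17_general n w w0 q hq S hdisj L m htype hvalid zhat hzhat
end

section
/- (Lemma 13.) Let τ = (I, L, m) be a triple satisfying conditions (r.1) and (r.2), and let z̃ ∈ {0,1}^n be feasible for problem (pqtype). For i ∈ I define S'_i = V_i ∩ {j : z̃_j = 1}. Then the inequality Σ_{i∈I} i·x(S'_i) ≥ q is valid for Π. -/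
open Finset

/-- Condition (r.1): the sets {m_i} ∪ L_i (i ∈ I) are pairwise disjoint; if
|L_i| < q−1 then m_i ∈ L_i; and if m_i ∉ L_i then w_{m_i} < w_{m_k} for all
k ∈ I with k > i. -/
def Rone (n q : ℕ) (w : Fin n → ℕ) (I : Finset ℕ) (L : ℕ → Finset (Fin n))
    (m : ℕ → Fin n) : Prop :=
  (∀ i ∈ I, ∀ k ∈ I, i ≠ k →
      Disjoint (insert (m i) (L i)) (insert (m k) (L k))) ∧
  (∀ i ∈ I, (L i).card < q - 1 → m i ∈ L i) ∧
  (∀ i ∈ I, m i ∉ L i → ∀ k ∈ I, i < k → w (m i) < w (m k))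

/-!
If a point `x ∈ Π` violated the inequality, the sets `A_i = {j ∈ S'_i | x_j = 1}` would satisfy
`∑ i·|A_i| < q`. Every element of `R_i` weighs at most any element of `L_i`, and `R_i` is nonempty
only when `|L_i| ≥ q - 1 ≥ |A_i|`; so each `A_i ⊆ V_i = R_i ∪ L_i` can be exchanged for a set
`T_i ⊆ L_i` of the same size and at least the same weight. The `T_i` are admissible in the
definition of the signature, hence `w(⋃ A_i) ≤ σ(τ)`. Every `j` with `x_j = z̃_j = 1` lies in
`⋃ A_i`, and feasibility of `z̃` says `σ(τ) + w({z̃ ≠ 1}) < w₀`, so `w(x) < w₀`: a contradiction.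
-/

namespace Finset

variable {ι : Type*}

section OrderedMonoid

variable {M : Type*} [AddCommMonoid M] [LinearOrder M] [IsOrderedAddMonoid M]

theorem sum_le_sum_of_card_eq_of_forall_le {s t : Finset ι} {f : ι → M} (hst : #s = #t)
    (hle : ∀ a ∈ s, ∀ b ∈ t, f a ≤ f b) : ∑ a ∈ s, f a ≤ ∑ b ∈ t, f b := by
  rcases s.eq_empty_or_nonempty with rfl | hs
  · rw [card_empty, eq_comm, card_eq_zero] at hst
    simp [hst]
  calc ∑ a ∈ s, f a ≤ #s • s.sup' hs f := sum_le_card_nsmul _ _ _ fun a ha => le_sup' f ha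
    _ = #t • s.sup' hs f := by rw [hst]
    _ ≤ ∑ b ∈ t, f b := card_nsmul_le_sum _ _ _ fun b hb => sup'_le hs f fun a ha => hle a ha b hb

theorem exists_subset_card_eq_sum_le [DecidableEq ι] {A L : Finset ι} {f : ι → M}
    (hcard : #A ≤ #L) (hle : ∀ a ∈ A \ L, ∀ b ∈ L, f a ≤ f b) :
    ∃ T ⊆ L, #T = #A ∧ ∑ a ∈ A, f a ≤ ∑ b ∈ T, f b := by
  have hsdiff : #(A \ L) ≤ #(L \ A) := by
    have hA := card_inter_add_card_sdiff A L
    have hL := card_inter_add_card_sdiff L A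
    rw [inter_comm] at hL
    omega
  obtain ⟨C, hC, hCcard⟩ := exists_subset_card_eq hsdiff
  have hdisj : Disjoint (A ∩ L) C :=
    disjoint_of_subset_right hC (disjoint_of_subset_left inter_subset_left disjoint_sdiff)
  refine ⟨A ∩ L ∪ C, union_subset inter_subset_right (hC.trans sdiff_subset), ?_, ?_⟩
  · rw [card_union_of_disjoint hdisj, hCcard, card_inter_add_card_sdiff]
  · rw [sum_union hdisj, ← sum_inter_add_sum_sdiff A L f]
    exact add_le_add le_rfl (sum_le_sum_of_card_eq_of_forall_le hCcard.symm
      fun a ha b hb => hle a ha b (sdiff_subset (hC hb)))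

end OrderedMonoid

theorem sum_biUnion_le {κ M : Type*} [DecidableEq ι] [AddCommMonoid M] [PartialOrder M]
    [CanonicallyOrderedAdd M] (s : Finset κ) (t : κ → Finset ι) (f : ι → M) :
    ∑ j ∈ s.biUnion t, f j ≤ ∑ i ∈ s, ∑ j ∈ t i, f j := by
  rw [← sup_eq_biUnion]
  exact apply_sup_le_sum (f := fun u => ∑ j ∈ u, f j) sum_empty (fun {u v} => by
    rw [← sum_union_inter]
    exact le_self_add) s

variable {R : Type*} [NonAssocSemiring R] [DecidableEq R]

theorem sum_mul_eq_sum_filter_of_zero_or_one (s : Finset ι) (c : ι → R) {y : ι → R}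
    (hy : ∀ j ∈ s, y j = 0 ∨ y j = 1) : ∑ j ∈ s, c j * y j = ∑ j ∈ s with y j = 1, c j := by
  rw [sum_filter]
  refine sum_congr rfl fun j hj => ?_
  rcases hy j hj with h | h
  · rw [h, mul_zero]
    split_ifs with h01
    · -- the zero ring
      rw [← mul_one (c j), ← h01, mul_zero]
    · rfl
  · simp [h]

theorem sum_eq_card_filter_of_zero_or_one (s : Finset ι) {y : ι → R}
    (hy : ∀ j ∈ s, y j = 0 ∨ y j = 1) : ∑ j ∈ s, y j = #{j ∈ s | y j = 1} := by
  simpa using sum_mul_eq_sum_filter_of_zero_or_one s 1 hy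

end Finset

open Finset

section Knapsack

variable {n q : ℕ} {w : Fin n → ℕ} {I : Finset ℕ} {L : ℕ → Finset (Fin n)} {m : ℕ → Fin n}

theorem mem_Rset {i : ℕ} {j : Fin n} :
    j ∈ Rset n q w I L m i ↔ q - 1 ≤ #(L i) ∧ j ∉ Fset n I L m i ∧ w (m i) ≤ w j ∧
      (∀ h ∈ L i, w j ≤ w h) ∧ ∀ k ∈ I, i < k → w j < w (m k) := by
  unfold Rset
  split_ifs with h <;> simp [h]

theorem Rone.pairwiseDisjoint (hr : Rone n q w I L m) : (I : Set ℕ).PairwiseDisjoint L :=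
  fun i hi k hk hik => (hr.1 i hi k hk hik).mono (subset_insert _ _) (subset_insert _ _)

theorem exists_subset_L_of_subset_Vset {i : ℕ} {A : Finset (Fin n)}
    (hA : A ⊆ Vset n q w I L m i) (hcard : #A < q) :
    ∃ T ⊆ L i, #T = #A ∧ ∑ j ∈ A, w j ≤ ∑ j ∈ T, w j := by
  by_cases hAL : A ⊆ L i
  · exact ⟨A, hAL, rfl, le_rfl⟩
  have hR : ∀ j ∈ A \ L i, j ∈ Rset n q w I L m i := fun j hj =>
    (mem_union.1 (hA (mem_sdiff.1 hj).1)).resolve_right (mem_sdiff.1 hj).2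
  obtain ⟨j, hjA, hjL⟩ := not_subset.1 hAL
  have hL := (mem_Rset.1 (hR j (mem_sdiff.2 ⟨hjA, hjL⟩))).1
  exact exists_subset_card_eq_sum_le (by omega) fun a ha b hb => (mem_Rset.1 (hR a ha)).2.2.2.1 b hb

theorem sum_le_signature (hL : (I : Set ℕ).PairwiseDisjoint L) {T : ℕ → Finset (Fin n)}
    (hT : ∀ i ∈ I, T i ⊆ L i) (hq : ∑ i ∈ I, i * #(T i) < q) :
    ∑ i ∈ I, ∑ j ∈ T i, w j ≤ signature n q w I L := by
  have hinter : ∀ i ∈ I, I.biUnion T ∩ L i = T i := by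
    intro i hi
    ext j
    simp only [mem_inter, mem_biUnion]
    refine ⟨fun ⟨⟨k, hk, hjk⟩, hjL⟩ => ?_, fun hj => ⟨⟨i, hi, hj⟩, hT i hi hj⟩⟩
    rwa [hL.elim_finset hk hi j (hT k hk hjk) hjL] at hjk
  rw [← sum_biUnion (hL.mono_on hT)]
  refine le_sup (f := fun T => ∑ j ∈ T, w j) (mem_filter.2 ⟨mem_powerset.2 (biUnion_mono hT), ?_⟩)
  rwa [sum_congr rfl fun i hi => by rw [hinter i hi]]

theorem sum_biUnion_le_signature (hL : (I : Set ℕ).PairwiseDisjoint L) (hI : ∀ i ∈ I, 0 < i)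
    {A : ℕ → Finset (Fin n)} (hA : ∀ i ∈ I, A i ⊆ Vset n q w I L m i)
    (hq : ∑ i ∈ I, i * #(A i) < q) :
    ∑ j ∈ I.biUnion A, w j ≤ signature n q w I L := by
  have hcard : ∀ i ∈ I, #(A i) < q := fun i hi =>
    calc #(A i) ≤ i * #(A i) := Nat.le_mul_of_pos_left _ (hI i hi)
      _ ≤ ∑ k ∈ I, k * #(A k) := single_le_sum (f := fun k => k * #(A k)) (by simp) hi
      _ < q := hq
  choose! T hTL hTcard hTw using fun i hi => exists_subset_L_of_subset_Vset (hA i hi) (hcard i hi)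
  calc ∑ j ∈ I.biUnion A, w j ≤ ∑ i ∈ I, ∑ j ∈ A i, w j := sum_biUnion_le _ _ _
    _ ≤ ∑ i ∈ I, ∑ j ∈ T i, w j := sum_le_sum hTw
    _ ≤ signature n q w I L := sum_le_signature hL hTL <| by
      rwa [sum_congr rfl fun i hi => by rw [hTcard i hi]]

variable {w0 : ℕ} {z : Fin n → ℝ}

theorem PqFeasible.exists_mem_Vset (hz : PqFeasible n q w w0 I L m z) {j : Fin n}
    (hj : z j = 1) : ∃ i ∈ I, j ∈ Vset n q w I L m i := by
  by_contra! h
  simpa [hj] using hz.2.2.1 j h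

theorem PqFeasible.signature_add_sum_lt (hz : PqFeasible n q w w0 I L m z) :
    signature n q w I L + ∑ j with z j ≠ 1, w j < w0 := by
  have hval := hz.2.2.2
  rw [sum_mul_eq_sum_filter_of_zero_or_one _ _ fun j _ => hz.1 j] at hval
  have hsplit := sum_filter_add_sum_filter_not univ (fun j => z j = 1) (fun j => (w j : ℝ))
  have : (signature n q w I L : ℝ) + ∑ j with z j ≠ 1, (w j : ℝ) + 1 ≤ w0 := by linarith
  exact_mod_cast this

end Knapsack

theorem stmt_18_general (n : ℕ) (w : Fin n → ℕ) (w0 : ℕ) (q : ℕ)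
    (I : Finset ℕ) (hI : I ⊆ Finset.Icc 1 q)
    (L : ℕ → Finset (Fin n)) (m : ℕ → Fin n)
    (hr1 : Rone n q w I L m)
    (z : Fin n → ℝ) (hz : PqFeasible n q w w0 I L m z)
    (S' : ℕ → Finset (Fin n))
    (hS' : ∀ i ∈ I, ∀ j : Fin n, j ∈ S' i ↔ j ∈ Vset n q w I L m i ∧ z j = 1) :
    ∀ x : Fin n → ℝ, (∀ j, x j = 0 ∨ x j = 1) →
      (w0 : ℝ) ≤ ∑ j, (w j : ℝ) * x j →
      (q : ℝ) ≤ ∑ i ∈ I, (i : ℝ) * ∑ j ∈ S' i, x j := by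
  intro x hx hxw
  by_contra! hlt
  set A : ℕ → Finset (Fin n) := fun i => {j ∈ S' i | x j = 1}
  have hAq : ∑ i ∈ I, i * #(A i) < q := by
    simp only [sum_eq_card_filter_of_zero_or_one _ fun j _ => hx j] at hlt
    exact_mod_cast hlt
  have hAV : ∀ i ∈ I, A i ⊆ Vset n q w I L m i := fun i hi j hj =>
    ((hS' i hi j).1 (mem_filter.1 hj).1).1
  have hσ := sum_biUnion_le_signature hr1.pairwiseDisjoint
    (fun i hi => (mem_Icc.1 (hI hi)).1) hAV hAq
  have hcover : ({j | x j = 1 ∧ z j = 1} : Finset (Fin n)) ⊆ I.biUnion A := fun j hj => by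
    obtain ⟨hx1, hz1⟩ := (mem_filter.1 hj).2
    obtain ⟨i, hi, hjV⟩ := hz.exists_mem_Vset hz1
    exact mem_biUnion.2 ⟨i, hi, mem_filter.2 ⟨(hS' i hi j).2 ⟨hjV, hz1⟩, hx1⟩⟩
  rw [sum_mul_eq_sum_filter_of_zero_or_one _ _ fun j _ => hx j] at hxw
  have hw0 : w0 ≤ ∑ j with x j = 1, w j := by exact_mod_cast hxw
  have hsplit : ∑ j with x j = 1, w j ≤ ∑ j ∈ I.biUnion A, w j + ∑ j with z j ≠ 1, w j := by
    rw [← sum_filter_add_sum_filter_not _ (fun j => z j = 1), filter_filter, filter_filter]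
    exact add_le_add (sum_le_sum_of_subset hcover)
      (sum_le_sum_of_subset (monotone_filter_right _ fun j _ h => h.2))
  have := hz.signature_add_sum_lt
  omega

/-- Lemma 13: if τ = (I, L, m) satisfies (r.1) and (r.2) and
z̃ ∈ {0,1}^n is feasible for problem (pqtype), then with S'_i = V_i ∩ {j : z̃_j = 1}
(i ∈ I), the inequality Σ_{i∈I} i·x(S'_i) ≥ q is valid for Π. -/
theorem stmt_18 (n : ℕ) (hn : 0 < n) (w : Fin n → ℕ) (w0 : ℕ)
    (hw : ∀ j, w j ≤ w0) (q : ℕ) (hq : 2 ≤ q)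
    (I : Finset ℕ) (hI : I ⊆ Finset.Icc 1 q)
    (L : ℕ → Finset (Fin n)) (m : ℕ → Fin n)
    (hr1 : Rone n q w I L m)
    (hr2 : ∀ i ∈ I, (L i).card ≤ q ^ 2)
    (z : Fin n → ℝ) (hz : PqFeasible n q w w0 I L m z)
    (S' : ℕ → Finset (Fin n))
    (hS' : ∀ i ∈ I, ∀ j : Fin n, j ∈ S' i ↔ j ∈ Vset n q w I L m i ∧ z j = 1) :
    ∀ x : Fin n → ℝ, (∀ j, x j = 0 ∨ x j = 1) →
      (w0 : ℝ) ≤ ∑ j, (w j : ℝ) * x j →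
      (q : ℝ) ≤ ∑ i ∈ I, (i : ℝ) * ∑ j ∈ S' i, x j :=
  stmt_18_general n w w0 q I hI L m hr1 z hz S' hS'
end
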